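/- arXiv:math/0304244 — 4 statements merged into one kernel-verified Lean document; each statement's English description precedes it below -/
import Mathlib

section
/- In the associative K-algebra A generated by x, y subject to the q-Serre relations, for every positive integer r the higher order q-Serre relation holds: ∑_{i=0}^{2r+1} (−1)^i [2r+1 choose i]_q · x^i y^r x^{2r+1−i} = 0, where [n choose i]_q denotes the q-binomial coefficient [n]!/([i]![n−i]!) with [n] = (qⁿ−q⁻ⁿ)/(q−q⁻¹). -/
noncomputable section

/-- The generator `x` of the free algebra on two generators. -/
def Xf (K : Type) [Field K] : FreeAlgebra K (Fin 2) := FreeAlgebra.ι K 0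

/-- The generator `y` of the free algebra on two generators. -/
def Yf (K : Type) [Field K] : FreeAlgebra K (Fin 2) := FreeAlgebra.ι K 1

/-- The quantum integer `[3] = (q³−q⁻³)/(q−q⁻¹)`. -/
def qthree {K : Type} [Field K] (q : K) : K := (q ^ 3 - q⁻¹ ^ 3) / (q - q⁻¹)

/-- The `q`-Serre relations on the free algebra on `x, y`. -/
inductive QSerreRel (K : Type) [Field K] (q : K) :
    FreeAlgebra K (Fin 2) → FreeAlgebra K (Fin 2) → Prop
  | xrel : QSerreRel K q
      (Xf K ^ 3 * Yf K - qthree q • (Xf K ^ 2 * Yf K * Xf K)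
        + qthree q • (Xf K * Yf K * Xf K ^ 2) - Yf K * Xf K ^ 3) 0
  | yrel : QSerreRel K q
      (Yf K ^ 3 * Xf K - qthree q • (Yf K ^ 2 * Xf K * Yf K)
        + qthree q • (Yf K * Xf K * Yf K ^ 2) - Xf K * Yf K ^ 3) 0

/-- The algebra `𝒜` generated by `x, y` subject to the `q`-Serre relations
(the positive part of `U_q(ŝl₂)`). -/
abbrev QSerreAlg (K : Type) [Field K] (q : K) := RingQuot (QSerreRel K q)

/-- The generator `x` of `𝒜`. -/
def Xq (K : Type) [Field K] (q : K) : QSerreAlg K q :=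
  RingQuot.mkAlgHom K (QSerreRel K q) (Xf K)

/-- The generator `y` of `𝒜`. -/
def Yq (K : Type) [Field K] (q : K) : QSerreAlg K q :=
  RingQuot.mkAlgHom K (QSerreRel K q) (Yf K)

/-- A word in the letters `x, y` (`true` = `x`, `false` = `y`), as an element of `𝒜`. -/
def wordA {K : Type} [Field K] (q : K) (w : List Bool) : QSerreAlg K q :=
  (w.map (fun b => if b then Xq K q else Yq K q)).prod

/-- The height of a word: (number of `x`'s) − (number of `y`'s). -/
def wheight (w : List Bool) : ℤ := (w.count true : ℤ) - (w.count false : ℤ)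

/-- A word is balanced whenever its height is `0`. -/
def BalancedW (w : List Bool) : Prop := wheight w = 0

/-- A word is height-symmetric whenever its height vector `(h₀,…,h_n)`,
`h_i` = height of the suffix starting at position `i`, satisfies `h_i = h_{n−i}`. -/
def HeightSym (w : List Bool) : Prop :=
  ∀ i ≤ w.length, wheight (w.drop i) = wheight (w.drop (w.length - i))

/-- A word is nil whenever some entry of its height vector is negative. -/
def NilWord (w : List Bool) : Prop := ∃ i, wheight (w.drop i) < 0

/-- `𝓑`, the span of the balanced words in `𝒜`. -/
def Bbal (K : Type) [Field K] (q : K) : Submodule K (QSerreAlg K q) :=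
  Submodule.span K {a | ∃ w : List Bool, BalancedW w ∧ a = wordA q w}

/-- `𝓑^sym`, the span of the height-symmetric words in `𝒜`. -/
def Bsym (K : Type) [Field K] (q : K) : Submodule K (QSerreAlg K q) :=
  Submodule.span K {a | ∃ w : List Bool, HeightSym w ∧ a = wordA q w}

/-- `𝓑^nil`, the span of the nil balanced words in `𝒜`. -/
def Bnil (K : Type) [Field K] (q : K) : Submodule K (QSerreAlg K q) :=
  Submodule.span K {a | ∃ w : List Bool, BalancedW w ∧ NilWord w ∧ a = wordA q w}

/-- The quantum integer `[n] = (qⁿ−q⁻ⁿ)/(q−q⁻¹)`. -/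
def qnum {K : Type} [Field K] (q : K) (n : ℕ) : K := (q ^ n - q⁻¹ ^ n) / (q - q⁻¹)

/-- The quantum factorial `[n]! = [n][n−1]⋯[1]`. -/
def qfact {K : Type} [Field K] (q : K) : ℕ → K
  | 0 => 1
  | n + 1 => qnum q (n + 1) * qfact q n

/-- The quantum binomial coefficient `[n choose i] = [n]!/([i]![n−i]!)`. -/
def qbinom {K : Type} [Field K] (q : K) (n i : ℕ) : K :=
  qfact q n / (qfact q i * qfact q (n - i))

/-!
Write `G_r = ∑ᵢ (-1)ⁱ [2r+1 choose i] xⁱ yʳ x^(2r+1-i)` and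
`Q_n(u, v) = ∏_{i<n} (v - q^(2i+1-n) u)`; by the `q`-binomial theorem the coefficients of `Q_n`
are the signed `q`-binomials. In `K[a][m][b]` put `F = Q_{2r+3}(a, b)`, `P = Q_{2r+1}(m, b)` and
`P' = Q_3(a, m)`. The linear map `a^α m^β b^γ ↦ x^α y x^β yʳ x^γ` sends `F` to `G_{r+1}`, every
multiple of `P` to a combination of the `x^α y x^β G_r x^γ`, and every multiple of `P'` to a
combination of the `x^α G_1 x^β yʳ x^γ`, where `G_1 = 0` is the `q`-Serre relation. So
`G_{r+1} = 0` follows from `G_r = 0` once `F ∈ (P, P')`. This holds because `P` is monic in `b`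
and becomes a subproduct of `F` at each of the three distinct roots `m = q^(2k-2) a` of `P'`;
hence every coefficient of the remainder of `F` modulo `P` vanishes at these roots and is
divisible by `P'`.
-/

namespace QSerre

open Polynomial Finset

section QInt

variable {K : Type} [Field K] {q : K}

lemma qnum_add (i j : ℕ) : qnum q (i + j) = q⁻¹ ^ i * qnum q j + q ^ j * qnum q i := by
  simp only [qnum]
  ring

variable (hq : q ≠ 0) (hroot : ∀ n : ℕ, 0 < n → q ^ n ≠ 1)
include hq hroot

lemma pow_sub_inv_pow_ne_zero {n : ℕ} (hn : 0 < n) : q ^ n - q⁻¹ ^ n ≠ 0 := by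
  intro h
  apply hroot (n + n) (by omega)
  rw [pow_add]
  nth_rewrite 1 [sub_eq_zero.mp h]
  rw [← mul_pow, inv_mul_cancel₀ hq, one_pow]

lemma qnum_ne_zero {n : ℕ} (hn : 0 < n) : qnum q n ≠ 0 :=
  div_ne_zero (pow_sub_inv_pow_ne_zero hq hroot hn)
    (by simpa using pow_sub_inv_pow_ne_zero hq hroot one_pos)

lemma qfact_ne_zero (n : ℕ) : qfact q n ≠ 0 := by
  induction n with
  | zero => exact one_ne_zero
  | succ n ih => exact mul_ne_zero (qnum_ne_zero hq hroot n.succ_pos) ih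

lemma qbinom_zero_right (n : ℕ) : qbinom q n 0 = 1 := by
  simp [qbinom, qfact, qfact_ne_zero hq hroot]

lemma qbinom_self (n : ℕ) : qbinom q n n = 1 := by
  simp [qbinom, qfact, qfact_ne_zero hq hroot]

lemma qnum_one : qnum q 1 = 1 := by
  simpa [qnum] using pow_sub_inv_pow_ne_zero hq hroot one_pos

lemma qbinom_succ_one (n : ℕ) : qbinom q (n + 1) 1 = qnum q (n + 1) := by
  simp [qbinom, qfact, qnum_one hq hroot, qfact_ne_zero hq hroot]

lemma qbinom_succ_self (n : ℕ) : qbinom q (n + 1) n = qnum q (n + 1) := by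
  simp [qbinom, qfact, qnum_one hq hroot, qfact_ne_zero hq hroot, show n + 1 - n = 1 by omega]

lemma qbinom_mul_qfact_mul_qfact (n i : ℕ) :
    qbinom q n i * (qfact q i * qfact q (n - i)) = qfact q n :=
  div_mul_cancel₀ _ (mul_ne_zero (qfact_ne_zero hq hroot i) (qfact_ne_zero hq hroot (n - i)))

lemma qbinom_succ_succ {n i : ℕ} (h : i < n) :
    qbinom q (n + 1) (i + 1) = q⁻¹ ^ (i + 1) * qbinom q n (i + 1) + q ^ (n - i) * qbinom q n i := by
  obtain ⟨j, rfl⟩ : ∃ j, n = i + j + 1 := ⟨n - i - 1, by omega⟩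
  have hfact := qbinom_mul_qfact_mul_qfact hq hroot
  apply mul_right_cancel₀ (mul_ne_zero (qfact_ne_zero hq hroot (i + 1))
    (qfact_ne_zero hq hroot (j + 1)))
  have e₁ := hfact (i + j + 1) (i + 1)
  have e₂ := hfact (i + j + 1) i
  have e₃ := hfact (i + j + 1 + 1) (i + 1)
  simp only [show i + j + 1 - (i + 1) = j by omega, show i + j + 1 - i = j + 1 by omega,
    show i + j + 1 + 1 - (i + 1) = j + 1 by omega] at e₁ e₂ e₃ ⊢
  have hnum := qnum_add (q := q) (i + 1) (j + 1)
  rw [show i + 1 + (j + 1) = i + j + 1 + 1 by omega] at hnum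
  simp only [qfact] at e₁ e₂ e₃ ⊢
  rw [e₃]
  linear_combination (qnum q (i + j + 1) * qfact q (i + j)) * hnum
    - (q⁻¹ ^ (i + 1) * qnum q (j + 1)) * e₁ - (q ^ (j + 1) * qnum q (i + 1)) * e₂

end QInt

lemma sum_range_smul_eq_of_pascal {K M : Type*} [Ring K] [AddCommGroup M] [Module K M]
    (f : ℕ → M) (α β γ : ℕ → K) (n : ℕ) (h₀ : γ 0 = α 0)
    (hmid : ∀ i < n, γ (i + 1) = α (i + 1) - β i) (htop : γ (n + 1) = -β n) :
    ∑ i ∈ range (n + 2), γ i • f i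
      = ∑ i ∈ range (n + 1), α i • f i - ∑ i ∈ range (n + 1), β i • f (i + 1) := by
  rw [sum_range_succ', sum_range_succ, sum_range_succ' (fun i => α i • f i),
    sum_range_succ (fun i => β i • f (i + 1)), h₀, htop,
    sum_congr rfl fun i hi => by rw [hmid i (mem_range.mp hi)]]
  simp only [sub_smul, sum_sub_distrib, neg_smul]
  abel

section QBinomial

variable {K : Type} [Field K] {q : K} (hq : q ≠ 0) (hroot : ∀ n : ℕ, 0 < n → q ^ n ≠ 1)
include hq hroot

theorem prod_sub_zpow_smul_eq_sum (n : ℕ) {R : Type*} [CommRing R] [Algebra K R] (u v : R) :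
    ∏ i ∈ range n, (v - q ^ (2 * (i : ℤ) + 1 - n) • u)
      = ∑ i ∈ range (n + 1), ((-1) ^ i * qbinom q n i) • (u ^ i * v ^ (n - i)) := by
  induction n generalizing u with
  | zero => simp [qbinom_zero_right hq hroot]
  | succ n ih =>
    have hprod : ∏ i ∈ range (n + 1), (v - q ^ (2 * (i : ℤ) + 1 - ↑(n + 1)) • u)
        = (∏ i ∈ range n, (v - q ^ (2 * (i : ℤ) + 1 - n) • (q⁻¹ • u))) * (v - q ^ n • u) := by
      rw [prod_range_succ]
      congr 1
      · refine prod_congr rfl fun i _ => ?_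
        rw [smul_smul, ← zpow_neg_one, ← zpow_add₀ hq]
        congr 3
        push_cast
        ring
      · rw [← zpow_natCast]
        congr 3
        push_cast
        ring
    have hterm : ∀ i ∈ range (n + 1),
        ((-1) ^ i * qbinom q n i) • ((q⁻¹ • u) ^ i * v ^ (n - i)) * (v - q ^ n • u)
          = ((-1) ^ i * qbinom q n i * q⁻¹ ^ i) • (u ^ i * v ^ (n + 1 - i))
            - ((-1) ^ i * qbinom q n i * q ^ (n - i)) • (u ^ (i + 1) * v ^ (n + 1 - (i + 1))) := by
      intro i hi
      have hi : i ≤ n := Nat.lt_succ_iff.mp (mem_range.mp hi)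
      have hpow : q⁻¹ ^ i * q ^ n = q ^ (n - i) := by
        rw [← Nat.sub_add_cancel hi, pow_add, Nat.add_sub_cancel, mul_comm, mul_assoc,
          ← mul_pow, mul_inv_cancel₀ hq, one_pow, mul_one]
      rw [show n + 1 - i = n - i + 1 by omega, Nat.add_sub_add_right, ← hpow]
      simp only [Algebra.smul_def, map_mul, map_pow]
      ring
    rw [hprod, ih, sum_mul, sum_congr rfl hterm, sum_sub_distrib]
    refine (sum_range_smul_eq_of_pascal (fun i => u ^ i * v ^ (n + 1 - i)) _ _ _ n ?_ ?_ ?_).symm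
    · simp [qbinom_zero_right hq hroot]
    · intro i hi
      rw [qbinom_succ_succ hq hroot hi]
      ring
    · simp [qbinom_self hq hroot, pow_succ]

end QBinomial

section QSerrePoly

variable {K : Type} [Field K] (R : Type*) [CommRing R] [Algebra K R]

def qSerrePoly (q : K) (n : ℕ) (u : R) : R[X] :=
  ∏ i ∈ range n, (X - C (q ^ (2 * (i : ℤ) + 1 - n) • u))

variable {R} {q : K}

lemma qSerrePoly_monic (n : ℕ) (u : R) : (qSerrePoly R q n u).Monic :=
  monic_prod_of_monic _ _ fun _ _ => monic_X_sub_C _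

lemma qSerrePoly_map_evalRingHom (n : ℕ) (u : R[X]) (t : R) :
    (qSerrePoly R[X] q n u).map (evalRingHom t) = qSerrePoly R q n (u.eval t) := by
  simp [qSerrePoly, Polynomial.map_prod, eval_smul]

lemma qSerrePoly_dvd (hq : q ≠ 0) {k n N : ℕ} (h : k + n ≤ N) (u : R) :
    qSerrePoly R q n (q ^ (2 * (k : ℤ) + n - N) • u) ∣ qSerrePoly R q N u := by
  have hshift : qSerrePoly R q n (q ^ (2 * (k : ℤ) + n - N) • u)
      = ∏ j ∈ Ico k (k + n), (X - C (q ^ (2 * (j : ℤ) + 1 - N) • u)) := by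
    rw [prod_Ico_eq_prod_range, Nat.add_sub_cancel_left, qSerrePoly]
    refine prod_congr rfl fun i _ => ?_
    rw [smul_smul, ← zpow_add₀ hq]
    congr 4
    push_cast
    ring
  rw [hshift, qSerrePoly]
  exact prod_dvd_prod_of_subset _ _ _ fun j hj => mem_range.mpr (by simp at hj; omega)

variable (hq : q ≠ 0) (hroot : ∀ n : ℕ, 0 < n → q ^ n ≠ 1)
include hq hroot

lemma qSerrePoly_eq_sum (n : ℕ) (u : R) :
    qSerrePoly R q n u
      = ∑ i ∈ range (n + 1), ((-1) ^ i * qbinom q n i) • (C u ^ i * X ^ (n - i)) := by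
  rw [qSerrePoly, ← prod_sub_zpow_smul_eq_sum hq hroot]
  simp only [smul_C]

end QSerrePoly

section Division

variable {S ι : Type*} [CommRing S] [IsDomain S] {s : Finset ι} {t : ι → S}

lemma prod_X_sub_C_dvd_of_isRoot (ht : Set.InjOn t s) {p : S[X]} (hp : ∀ i ∈ s, p.IsRoot (t i)) :
    ∏ i ∈ s, (X - C (t i)) ∣ p := by
  rcases eq_or_ne p 0 with rfl | hp0
  · exact dvd_zero _
  have hprod : ∏ i ∈ s, (X - C (t i)) = ((s.val.map t).map fun a => X - C a).prod := by
    rw [Multiset.map_map]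
    rfl
  rw [hprod, Multiset.prod_X_sub_C_dvd_iff_le_roots hp0,
    Multiset.le_iff_subset (s.nodup.map_on fun i hi j hj h => ht hi hj h)]
  intro a ha
  obtain ⟨i, hi, rfl⟩ := Multiset.mem_map.mp ha
  exact (mem_roots hp0).mpr (hp i hi)

lemma exists_eq_mul_add_C_prod_mul (ht : Set.InjOn t s) {f g : S[X][X]} (hg : g.Monic)
    (hdvd : ∀ i ∈ s, g.map (evalRingHom (t i)) ∣ f.map (evalRingHom (t i))) :
    ∃ V W, f = g * V + C (∏ i ∈ s, (X - C (t i))) * W := by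
  have hrem : ∀ i ∈ s, (f %ₘ g).map (evalRingHom (t i)) = 0 := fun i hi => by
    rw [map_modByMonic _ hg]
    exact (modByMonic_eq_zero_iff_dvd (hg.map _)).mpr (hdvd i hi)
  obtain ⟨W, hW⟩ := (C_dvd_iff_dvd_coeff _ _).mpr fun n =>
    prod_X_sub_C_dvd_of_isRoot ht fun i hi => by
      simpa using congrArg (coeff · n) (hrem i hi)
  exact ⟨f /ₘ g, W, by rw [← hW, add_comm, modByMonic_add_div f g]⟩

end Division

section Decomposition

variable {K : Type} [Field K] {q : K} (hq : q ≠ 0) (hroot : ∀ n : ℕ, 0 < n → q ^ n ≠ 1)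
include hq hroot

lemma zpow_injective_of_not_root : Function.Injective fun n : ℤ => q ^ n := by
  have hfin : ¬IsOfFinOrder (Units.mk0 q hq) := by
    rw [isOfFinOrder_iff_pow_eq_one]
    rintro ⟨n, hn, h⟩
    exact hroot n hn (by simpa using congrArg Units.val h)
  intro m n h
  exact injective_zpow_iff_not_isOfFinOrder.mpr hfin (Units.ext (by simpa using h))

lemma qSerrePoly_eq_mul_add_C_mul (r : ℕ) :
    ∃ V W, qSerrePoly K[X][X] q (2 * r + 3) (C X)
      = qSerrePoly K[X][X] q (2 * r + 1) X * V + C (qSerrePoly K[X] q 3 X) * W := by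
  refine exists_eq_mul_add_C_prod_mul (s := range 3)
    (t := fun k => q ^ (2 * (k : ℤ) + 1 - (3 : ℕ)) • (X : K[X])) ?_ (qSerrePoly_monic _ _) ?_
  · intro k _ l _ h
    have := zpow_injective_of_not_root hq hroot (smul_left_injective K X_ne_zero h)
    omega
  · intro k hk
    rw [qSerrePoly_map_evalRingHom, qSerrePoly_map_evalRingHom, eval_X, eval_C]
    convert qSerrePoly_dvd hq (show k + (2 * r + 1) ≤ 2 * r + 3 by simp at hk; omega) X using 4
    push_cast
    ring

end Decomposition

section WordMaps

variable {K : Type} [Field K] {A : Type*} [Ring A] [Algebra K A] (x : A)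

def sandwichEval {R : Type*} [Semiring R] [Module K R] (L : R →ₗ[K] A) (z : A) : R[X] →ₗ[K] A :=
  lsum fun j => LinearMap.mulRight K (z * x ^ j) ∘ₗ L

section Sandwich

variable {R : Type*} [Semiring R] [Module K R] (L : R →ₗ[K] A) (z : A)

lemma sandwichEval_monomial (j : ℕ) (c : R) :
    sandwichEval x L z (monomial j c) = L c * (z * x ^ j) := by
  simp [sandwichEval, mul_assoc]

lemma sandwichEval_C_mul_X_pow (c : R) (j : ℕ) :
    sandwichEval x L z (C c * X ^ j) = L c * (z * x ^ j) := by
  rw [C_mul_X_pow_eq_monomial, sandwichEval_monomial]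

lemma sandwichEval_C (c : R) : sandwichEval x L z (C c) = L c * z := by
  simpa using sandwichEval_C_mul_X_pow x L z c 0

lemma sandwichEval_mul_X_pow (p : R[X]) (n : ℕ) :
    sandwichEval x L z (p * X ^ n) = sandwichEval x L z p * x ^ n := by
  induction p using Polynomial.induction_on' with
  | add p p' hp hp' => rw [add_mul, map_add, map_add, hp, hp', add_mul]
  | monomial j c =>
    rw [monomial_mul_X_pow, sandwichEval_monomial, sandwichEval_monomial, pow_add]
    simp only [mul_assoc]

end Sandwich

/-- `wordEval x z : K[a][m] → A` sends `a ^ α * m ^ β` to `x ^ α * z * x ^ β`. -/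
def wordEval (z : A) : K[X][X] →ₗ[K] A := sandwichEval x (aeval x).toLinearMap z

/-- `wordEval₃ x y r : K[a][m][b] → A` sends `a ^ α * m ^ β * b ^ γ` to
`x ^ α * y * x ^ β * y ^ r * x ^ γ`. -/
def wordEval₃ (y : A) (r : ℕ) : K[X][X][X] →ₗ[K] A := sandwichEval x (wordEval x y) (y ^ r)

def serreSum (q : K) (z : A) (n : ℕ) : A :=
  ∑ i ∈ range (n + 1), ((-1) ^ i * qbinom q n i) • (x ^ i * z * x ^ (n - i))

variable {x}

lemma wordEval_C_mul (z : A) (c : K[X]) (p : K[X][X]) :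
    wordEval x z (C c * p) = aeval x c * wordEval x z p := by
  induction p using Polynomial.induction_on' with
  | add p p' hp hp' => rw [mul_add, map_add, map_add, hp, hp', mul_add]
  | monomial j d =>
    simp only [wordEval, C_mul_monomial, sandwichEval_monomial, AlgHom.toLinearMap_apply, map_mul,
      mul_assoc]

lemma wordEval_mul_eq_zero {z : A} {p : K[X][X]} (hp : wordEval x z p = 0) (d : K[X][X]) :
    wordEval x z (p * d) = 0 := by
  induction d using Polynomial.induction_on' with
  | add d d' hd hd' => rw [mul_add, map_add, hd, hd', add_zero]
  | monomial j c =>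
    rw [← C_mul_X_pow_eq_monomial, ← mul_assoc, mul_comm p, wordEval, sandwichEval_mul_X_pow,
      ← wordEval, wordEval_C_mul, hp, mul_zero, zero_mul]

lemma wordEval₃_C_mul_eq_zero {y : A} {r : ℕ} {c : K[X][X]} (hc : ∀ d, wordEval x y (c * d) = 0)
    (p : K[X][X][X]) : wordEval₃ x y r (C c * p) = 0 := by
  induction p using Polynomial.induction_on' with
  | add p p' hp hp' => rw [mul_add, map_add, hp, hp', add_zero]
  | monomial j d =>
    rw [wordEval₃, C_mul_monomial, sandwichEval_monomial, hc, zero_mul]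

variable {q : K} (hq : q ≠ 0) (hroot : ∀ n : ℕ, 0 < n → q ^ n ≠ 1)
include hq hroot

lemma wordEval_qSerrePoly (z : A) (n : ℕ) :
    wordEval x z (qSerrePoly K[X] q n X) = serreSum x q z n := by
  simp only [qSerrePoly_eq_sum hq hroot, map_sum, map_smul, ← map_pow, wordEval,
    sandwichEval_C_mul_X_pow, AlgHom.toLinearMap_apply, aeval_X_pow, serreSum, mul_assoc]

lemma wordEval₃_qSerrePoly_mul_C (y : A) (r n : ℕ) (d : K[X][X]) :
    wordEval₃ x y r (qSerrePoly K[X][X] q n X * C d)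
      = wordEval x y d * serreSum x q (y ^ r) n := by
  simp only [qSerrePoly_eq_sum hq hroot, sum_mul, smul_mul_assoc, map_sum, map_smul, serreSum,
    Finset.mul_sum, mul_smul_comm]
  refine sum_congr rfl fun i _ => ?_
  rw [mul_right_comm, ← map_pow, ← map_mul, wordEval₃, sandwichEval_C_mul_X_pow,
    mul_comm (X ^ i) d, wordEval, sandwichEval_mul_X_pow]
  simp only [mul_assoc]

lemma wordEval₃_qSerrePoly_mul_eq_zero {y : A} {r n : ℕ} (h : serreSum x q (y ^ r) n = 0)
    (p : K[X][X][X]) : wordEval₃ x y r (qSerrePoly K[X][X] q n X * p) = 0 := by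
  induction p using Polynomial.induction_on' with
  | add p p' hp hp' => rw [mul_add, map_add, hp, hp', add_zero]
  | monomial j d =>
    rw [← C_mul_X_pow_eq_monomial, ← mul_assoc, wordEval₃, sandwichEval_mul_X_pow, ← wordEval₃,
      wordEval₃_qSerrePoly_mul_C hq hroot, h, mul_zero, zero_mul]

lemma wordEval₃_qSerrePoly_C (y : A) (r n : ℕ) :
    wordEval₃ x y r (qSerrePoly K[X][X] q n (C X)) = serreSum x q (y ^ (r + 1)) n := by
  simp only [qSerrePoly_eq_sum hq hroot, map_sum, map_smul, ← map_pow, wordEval₃,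
    sandwichEval_C_mul_X_pow, wordEval, sandwichEval_C, AlgHom.toLinearMap_apply, aeval_X_pow,
    serreSum, pow_succ', mul_assoc]

end WordMaps

section HigherSerre

variable {K : Type} [Field K] {A : Type*} [Ring A] [Algebra K A] {x y : A}
  {q : K} (hq : q ≠ 0) (hroot : ∀ n : ℕ, 0 < n → q ^ n ≠ 1)
include hq hroot

lemma serreSum_three : serreSum x q y 3
    = -(x ^ 3 * y - qthree q • (x ^ 2 * y * x) + qthree q • (x * y * x ^ 2) - y * x ^ 3) := by
  rw [serreSum, sum_range_succ, sum_range_succ, sum_range_succ, sum_range_one,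
    qbinom_zero_right hq hroot, qbinom_succ_one hq hroot 2, qbinom_succ_self hq hroot 2,
    qbinom_self hq hroot, show qnum q (2 + 1) = qthree q from rfl]
  simp only [Nat.reduceSub, Nat.sub_self, pow_zero, pow_one, one_mul, mul_one]
  module

theorem serreSum_pow_eq_zero
    (hrel : x ^ 3 * y - qthree q • (x ^ 2 * y * x) + qthree q • (x * y * x ^ 2) - y * x ^ 3 = 0)
    (r : ℕ) : serreSum x q (y ^ r) (2 * r + 1) = 0 := by
  induction r with
  | zero => simp [serreSum, sum_range_succ, qbinom_zero_right hq hroot, qbinom_self hq hroot]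
  | succ r ih =>
    have hQ₃ : ∀ d, wordEval x y (qSerrePoly K[X] q 3 X * d) = 0 :=
      wordEval_mul_eq_zero
        (by rw [wordEval_qSerrePoly hq hroot, serreSum_three hq hroot, hrel, neg_zero])
    obtain ⟨V, W, hVW⟩ := qSerrePoly_eq_mul_add_C_mul hq hroot r
    rw [show 2 * (r + 1) + 1 = 2 * r + 3 by ring, ← wordEval₃_qSerrePoly_C hq hroot y r, hVW,
      map_add, wordEval₃_qSerrePoly_mul_eq_zero hq hroot ih, wordEval₃_C_mul_eq_zero hQ₃, add_zero]

end HigherSerre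

end QSerre

theorem stmt2_general (K : Type) [Field K]
    (q : K) (hq : q ≠ 0) (hroot : ∀ n : ℕ, 0 < n → q ^ n ≠ 1)
    (r : ℕ) :
    ∑ i ∈ Finset.range (2 * r + 2),
      ((-1 : K) ^ i * qbinom q (2 * r + 1) i) •
        (Xq K q ^ i * Yq K q ^ r * Xq K q ^ (2 * r + 1 - i)) = 0 := by
  have hrel := RingQuot.mkAlgHom_rel K (QSerreRel.xrel (K := K) (q := q))
  simp only [map_sub, map_add, map_smul, map_mul, map_pow, map_zero] at hrel
  exact QSerre.serreSum_pow_eq_zero hq hroot hrel r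

/-- the higher order `q`-Serre relations hold in `𝒜`:
`∑_{i=0}^{2r+1} (−1)^i [2r+1 choose i] x^i y^r x^{2r+1−i} = 0` for every positive `r`. -/
theorem stmt2 (K : Type) [Field K] [IsAlgClosed K] [CharZero K]
    (q : K) (hq : q ≠ 0) (hroot : ∀ n : ℕ, 0 < n → q ^ n ≠ 1)
    (r : ℕ) (hr : 0 < r) :
    ∑ i ∈ Finset.range (2 * r + 2),
      ((-1 : K) ^ i * qbinom q (2 * r + 1) i) •
        (Xq K q ^ i * Yq K q ^ r * Xq K q ^ (2 * r + 1 - i)) = 0 :=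
  stmt2_general K q hq hroot r
end
end

section
/- Let n ≥ 2r+1 ≥ 3 and let S_i ∈ K^{2r+1} be the vector with entries (S_i)_j = q^{2ij} for −r ≤ j ≤ r, where q ∈ K is not a root of unity. Then for 0 ≤ i ≤ n, S_i = ∑_{ξ=0}^{r} ([i]_ξ [r−i]_{r−ξ} [n−i]_r)/([ξ]_ξ [r−ξ]_{r−ξ} [n−ξ]_r) · S_ξ + ∑_{ζ=0}^{r−1} ([i]_{r+1} [i−n+r−1]_{r−ζ−1} [n−i]_ζ)/([n−ζ]_{r+1} [r−ζ−1]_{r−ζ−1} [ζ]_ζ) · S_{n−ζ}, where [m]_k = [m][m−1]⋯[m−k+1] is the falling q-factorial with [m] = (q^m−q^{−m})/(q−q^{−1}). -/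
noncomputable section

/-- The quantum integer `[m] = (q^m − q^{−m})/(q − q⁻¹)` for `m ∈ ℤ`. -/
def qintZ {K : Type} [Field K] (q : K) (m : ℤ) : K := (q ^ m - q ^ (-m)) / (q - q⁻¹)

/-- The falling quantum factorial `[m]_k = [m][m−1]⋯[m−k+1]`. -/
def qfall {K : Type} [Field K] (q : K) (m : ℤ) (k : ℕ) : K :=
  ∏ t ∈ Finset.range k, qintZ q (m - (t : ℤ))

namespace Stmt4Aux

open Finset

variable {K : Type} [Field K] {q : K}

lemma zpow_ne_one (hq : q ≠ 0) (hroot : ∀ m : ℕ, 0 < m → q ^ m ≠ 1) :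
    ∀ a : ℤ, a ≠ 0 → q ^ a ≠ 1 := by
  intro a ha
  rcases lt_trichotomy a 0 with h | h | h
  · intro hcon
    have h2 : q ^ ((-a).toNat) ≠ 1 := hroot _ (by omega)
    apply h2
    have : q ^ (((-a).toNat : ℤ)) = 1 := by
      rw [Int.toNat_of_nonneg (by omega), zpow_neg, hcon, inv_one]
    rwa [zpow_natCast] at this
  · exact absurd h ha
  · intro hcon
    have h2 : q ^ (a.toNat) ≠ 1 := hroot _ (by omega)
    apply h2
    have : q ^ ((a.toNat : ℤ)) = 1 := by rwa [Int.toNat_of_nonneg (by omega)]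
    rwa [zpow_natCast] at this

lemma W_ne (hq : q ≠ 0) (hroot : ∀ m : ℕ, 0 < m → q ^ m ≠ 1) {a b : ℤ} (hab : a ≠ b) :
    q ^ (2 * a) ≠ q ^ (2 * b) := by
  intro h
  apply zpow_ne_one hq hroot (2 * a - 2 * b) (by omega)
  rw [zpow_sub₀ hq, h, div_self (zpow_ne_zero _ hq)]

lemma c_ne (hq : q ≠ 0) (hroot : ∀ m : ℕ, 0 < m → q ^ m ≠ 1) : q - q⁻¹ ≠ 0 := by
  intro h
  have h1 : q = q⁻¹ := sub_eq_zero.mp h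
  have h2 : q ^ (2 : ℕ) = 1 := by
    rw [pow_two]; nth_rewrite 2 [h1]; exact mul_inv_cancel₀ hq
  exact hroot 2 (by norm_num) h2

lemma qintZ_mul (hq : q ≠ 0) (hc : q - q⁻¹ ≠ 0) (x y : ℤ) :
    qintZ q (x - y) * ((q - q⁻¹) * q ^ (2 * y)) = q ^ (y - x) * (q ^ (2 * x) - q ^ (2 * y)) := by
  unfold qintZ
  rw [div_mul_eq_mul_div,
    show (q ^ (x - y) - q ^ (-(x - y))) * ((q - q⁻¹) * q ^ (2 * y)) =
      (q ^ (x - y) - q ^ (-(x - y))) * q ^ (2 * y) * (q - q⁻¹) from by ring,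
    mul_div_cancel_right₀ _ hc]
  rw [neg_sub, sub_mul, mul_sub, ← zpow_add₀ hq, ← zpow_add₀ hq, ← zpow_add₀ hq]
  congr 2 <;> ring


lemma ratio_key (hq : q ≠ 0) (hroot : ∀ m : ℕ, 0 < m → q ^ m ≠ 1) (i b y : ℤ) (hby : b ≠ y) :
    qintZ q (i - y) / qintZ q (b - y) =
      q ^ (b - i) * ((q ^ (2 * i) - q ^ (2 * y)) / (q ^ (2 * b) - q ^ (2 * y))) := by
  have hc := c_ne hq hroot
  have hk : (q - q⁻¹) * q ^ (2 * y) ≠ 0 := mul_ne_zero hc (zpow_ne_zero _ hq)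
  calc qintZ q (i - y) / qintZ q (b - y)
      = qintZ q (i - y) * ((q - q⁻¹) * q ^ (2 * y)) /
        (qintZ q (b - y) * ((q - q⁻¹) * q ^ (2 * y))) := (mul_div_mul_right _ _ hk).symm
    _ = q ^ (y - i) * (q ^ (2 * i) - q ^ (2 * y)) /
        (q ^ (y - b) * (q ^ (2 * b) - q ^ (2 * y))) := by
        rw [qintZ_mul hq hc, qintZ_mul hq hc]
    _ = q ^ (y - i) / q ^ (y - b) *
        ((q ^ (2 * i) - q ^ (2 * y)) / (q ^ (2 * b) - q ^ (2 * y))) := mul_div_mul_comm _ _ _ _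
    _ = q ^ (b - i) * ((q ^ (2 * i) - q ^ (2 * y)) / (q ^ (2 * b) - q ^ (2 * y))) := by
        rw [← zpow_sub₀ hq]; congr 2; ring

lemma ratio_key' (hq : q ≠ 0) (hroot : ∀ m : ℕ, 0 < m → q ^ m ≠ 1) (i b x : ℤ) (hbx : b ≠ x) :
    qintZ q (x - i) / qintZ q (x - b) =
      q ^ (b - i) * ((q ^ (2 * i) - q ^ (2 * x)) / (q ^ (2 * b) - q ^ (2 * x))) := by
  have hc := c_ne hq hroot
  have hk : (q - q⁻¹) * q ^ (2 * i) * q ^ (2 * b) ≠ 0 :=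
    mul_ne_zero (mul_ne_zero hc (zpow_ne_zero _ hq)) (zpow_ne_zero _ hq)
  have h1 := qintZ_mul hq hc x i
  have h2 := qintZ_mul hq hc x b
  calc qintZ q (x - i) / qintZ q (x - b)
      = qintZ q (x - i) * ((q - q⁻¹) * q ^ (2 * i) * q ^ (2 * b)) /
        (qintZ q (x - b) * ((q - q⁻¹) * q ^ (2 * i) * q ^ (2 * b))) :=
          (mul_div_mul_right _ _ hk).symm
    _ = q ^ (i - x) * (q ^ (2 * x) - q ^ (2 * i)) * q ^ (2 * b) /
        (q ^ (b - x) * (q ^ (2 * x) - q ^ (2 * b)) * q ^ (2 * i)) := by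
        rw [show qintZ q (x - i) * ((q - q⁻¹) * q ^ (2 * i) * q ^ (2 * b)) =
            qintZ q (x - i) * ((q - q⁻¹) * q ^ (2 * i)) * q ^ (2 * b) from by ring, h1,
          show qintZ q (x - b) * ((q - q⁻¹) * q ^ (2 * i) * q ^ (2 * b)) =
            qintZ q (x - b) * ((q - q⁻¹) * q ^ (2 * b)) * q ^ (2 * i) from by ring, h2]
    _ = q ^ (i - x) * (q ^ (2 * x) - q ^ (2 * i)) / (q ^ (b - x) * (q ^ (2 * x) - q ^ (2 * b))) *
        (q ^ (2 * b) / q ^ (2 * i)) := mul_div_mul_comm _ _ _ _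
    _ = q ^ (i - x) / q ^ (b - x) *
        ((q ^ (2 * x) - q ^ (2 * i)) / (q ^ (2 * x) - q ^ (2 * b))) *
        (q ^ (2 * b) / q ^ (2 * i)) := by rw [mul_div_mul_comm]
    _ = q ^ (b - i) * ((q ^ (2 * i) - q ^ (2 * x)) / (q ^ (2 * b) - q ^ (2 * x))) := by
        rw [show (q ^ (2 * i) - q ^ (2 * x)) / (q ^ (2 * b) - q ^ (2 * x)) =
            -(q ^ (2 * x) - q ^ (2 * i)) / -(q ^ (2 * x) - q ^ (2 * b)) from by
              rw [neg_sub, neg_sub], neg_div_neg_eq]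
        rw [← zpow_sub₀ hq, ← zpow_sub₀ hq, mul_right_comm, ← zpow_add₀ hq]
        congr 2
        ring


lemma groupA (hq : q ≠ 0) (hroot : ∀ m : ℕ, 0 < m → q ^ m ≠ 1) (i b w : ℤ) (k : ℕ)
    (hb : ∀ t ∈ Finset.range k, b ≠ w + t) :
    qfall q (i - w) k / qfall q (b - w) k =
      (q ^ (b - i)) ^ k *
        ∏ t ∈ Finset.range k,
          ((q ^ (2 * i) - q ^ (2 * (w + t))) / (q ^ (2 * b) - q ^ (2 * (w + t)))) := by
  unfold qfall
  rw [← Finset.prod_div_distrib]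
  rw [Finset.prod_congr rfl (fun t ht => by
    rw [show i - w - (t : ℤ) = i - (w + t) from by ring,
      show b - w - (t : ℤ) = b - (w + t) from by ring,
      ratio_key hq hroot i b (w + t) (hb t ht)])]
  rw [Finset.prod_mul_distrib, Finset.prod_const, Finset.card_range]

lemma groupB (hq : q ≠ 0) (hroot : ∀ m : ℕ, 0 < m → q ^ m ≠ 1) (i b v : ℤ) (k : ℕ)
    (hb : ∀ t ∈ Finset.range k, b ≠ v - t) :
    qfall q (v - i) k / qfall q (v - b) k =
      (q ^ (b - i)) ^ k *
        ∏ t ∈ Finset.range k,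
          ((q ^ (2 * i) - q ^ (2 * (v - t))) / (q ^ (2 * b) - q ^ (2 * (v - t)))) := by
  unfold qfall
  rw [← Finset.prod_div_distrib]
  rw [Finset.prod_congr rfl (fun t ht => by
    rw [show v - i - (t : ℤ) = (v - t) - i from by ring,
      show v - b - (t : ℤ) = (v - t) - b from by ring,
      ratio_key' hq hroot i b (v - t) (hb t ht)])]
  rw [Finset.prod_mul_distrib, Finset.prod_const, Finset.card_range]

lemma reindex_down (f : ℤ → K) (v k : ℕ) (hk : k ≤ v) :
    ∏ t ∈ Finset.range k, f ((v : ℤ) - t) = ∏ a ∈ Finset.Ioc (v - k) v, f (a : ℤ) := by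
  refine Finset.prod_nbij' (fun t => v - t) (fun a => v - a) ?_ ?_ ?_ ?_ ?_ <;>
    intro a ha <;> simp only [Finset.mem_range, Finset.mem_Ioc] at * <;> first
      | omega
      | (congr 1 <;> omega)

lemma reindex_up (f : ℤ → K) (w k : ℕ) :
    ∏ t ∈ Finset.range k, f ((w : ℤ) + t) = ∏ a ∈ Finset.Ico w (w + k), f (a : ℤ) := by
  refine Finset.prod_nbij' (fun t => w + t) (fun a => a - w) ?_ ?_ ?_ ?_ ?_ <;>
    intro a ha <;> simp only [Finset.mem_range, Finset.mem_Ico] at * <;> first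
      | omega
      | (congr 1 <;> omega)


lemma coeffA (hq : q ≠ 0) (hroot : ∀ m : ℕ, 0 < m → q ^ m ≠ 1) (r n ξ : ℕ)
    (hξ : ξ ≤ r) (hn : 2 * r + 1 ≤ n) (i : ℤ) :
    (qfall q i ξ * qfall q ((r : ℤ) - i) (r - ξ) * qfall q ((n : ℤ) - i) r) /
      (qfall q (ξ : ℤ) ξ * qfall q ((r : ℤ) - (ξ : ℤ)) (r - ξ) *
        qfall q ((n : ℤ) - (ξ : ℤ)) r) =
    (q ^ (2 * (ξ : ℤ) - 2 * i)) ^ r *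
      ∏ a ∈ (Finset.range (r + 1) ∪ Finset.Ioc (n - r) n).erase ξ,
        ((q ^ (2 * i) - q ^ (2 * (a : ℤ))) / (q ^ (2 * (ξ : ℤ)) - q ^ (2 * (a : ℤ)))) := by
  set F : ℤ → K := fun z => (q ^ (2 * i) - q ^ (2 * z)) / (q ^ (2 * (ξ : ℤ)) - q ^ (2 * z))
    with hF
  have h1 : qfall q i ξ / qfall q (ξ : ℤ) ξ =
      (q ^ ((ξ : ℤ) - i)) ^ ξ * ∏ a ∈ Finset.range ξ, F (a : ℤ) := by
    have hg := groupA hq hroot i (ξ : ℤ) 0 ξ (by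
      intro t ht; simp only [Finset.mem_range] at ht; omega)
    rw [sub_zero, sub_zero] at hg
    rw [hg]
    congr 1
    refine Finset.prod_congr rfl fun t ht => ?_
    simp only [hF]
    rw [zero_add]
  have h2 : qfall q ((r : ℤ) - i) (r - ξ) / qfall q ((r : ℤ) - (ξ : ℤ)) (r - ξ) =
      (q ^ ((ξ : ℤ) - i)) ^ (r - ξ) * ∏ a ∈ Finset.Ioc ξ r, F (a : ℤ) := by
    have hg := groupB hq hroot i (ξ : ℤ) (r : ℤ) (r - ξ) (by
      intro t ht; simp only [Finset.mem_range] at ht; omega)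
    rw [hg]
    congr 1
    rw [reindex_down F r (r - ξ) (by omega), show r - (r - ξ) = ξ from by omega]
  have h3 : qfall q ((n : ℤ) - i) r / qfall q ((n : ℤ) - (ξ : ℤ)) r =
      (q ^ ((ξ : ℤ) - i)) ^ r * ∏ a ∈ Finset.Ioc (n - r) n, F (a : ℤ) := by
    have hg := groupB hq hroot i (ξ : ℤ) (n : ℤ) r (by
      intro t ht; simp only [Finset.mem_range] at ht; omega)
    rw [hg]
    congr 1
    rw [reindex_down F n r (by omega)]
  have hsplit : (qfall q i ξ * qfall q ((r : ℤ) - i) (r - ξ) * qfall q ((n : ℤ) - i) r) /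
      (qfall q (ξ : ℤ) ξ * qfall q ((r : ℤ) - (ξ : ℤ)) (r - ξ) *
        qfall q ((n : ℤ) - (ξ : ℤ)) r) =
      (qfall q i ξ / qfall q (ξ : ℤ) ξ) *
        (qfall q ((r : ℤ) - i) (r - ξ) / qfall q ((r : ℤ) - (ξ : ℤ)) (r - ξ)) *
        (qfall q ((n : ℤ) - i) r / qfall q ((n : ℤ) - (ξ : ℤ)) r) := by
    rw [div_mul_div_comm, div_mul_div_comm]
  have hset : (Finset.range (r + 1) ∪ Finset.Ioc (n - r) n).erase ξ =
      (Finset.range ξ ∪ Finset.Ioc ξ r) ∪ Finset.Ioc (n - r) n := by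
    ext a
    simp only [Finset.mem_erase, Finset.mem_union, Finset.mem_range, Finset.mem_Ioc]
    omega
  have hd1 : Disjoint (Finset.range ξ) (Finset.Ioc ξ r) := by
    rw [Finset.disjoint_left]
    intro a ha hb
    simp only [Finset.mem_range, Finset.mem_Ioc] at *
    omega
  have hd2 : Disjoint (Finset.range ξ ∪ Finset.Ioc ξ r) (Finset.Ioc (n - r) n) := by
    rw [Finset.disjoint_left]
    intro a ha hb
    simp only [Finset.mem_union, Finset.mem_range, Finset.mem_Ioc] at *
    omega
  have hpow : (q ^ ((ξ : ℤ) - i)) ^ (2 * r) = (q ^ (2 * (ξ : ℤ) - 2 * i)) ^ r := by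
    rw [pow_mul]
    congr 1
    rw [← zpow_natCast (q ^ ((ξ : ℤ) - i)) 2, ← zpow_mul]
    congr 1
    push_cast
    ring
  rw [hsplit, h1, h2, h3, hset, Finset.prod_union hd2, Finset.prod_union hd1, ← hpow,
    show 2 * r = ξ + (r - ξ) + r from by omega, pow_add, pow_add]
  ring


lemma coeffB (hq : q ≠ 0) (hroot : ∀ m : ℕ, 0 < m → q ^ m ≠ 1) (r n ζ : ℕ)
    (hζ : ζ < r) (hn : 2 * r + 1 ≤ n) (i : ℤ) :
    (qfall q i (r + 1) * qfall q (i - (n : ℤ) + (r : ℤ) - 1) (r - ζ - 1) *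
        qfall q ((n : ℤ) - i) ζ) /
      (qfall q ((n : ℤ) - (ζ : ℤ)) (r + 1) * qfall q ((r : ℤ) - (ζ : ℤ) - 1) (r - ζ - 1) *
        qfall q (ζ : ℤ) ζ) =
    (q ^ (2 * ((n : ℤ) - (ζ : ℤ)) - 2 * i)) ^ r *
      ∏ a ∈ (Finset.range (r + 1) ∪ Finset.Ioc (n - r) n).erase (n - ζ),
        ((q ^ (2 * i) - q ^ (2 * (a : ℤ))) /
          (q ^ (2 * ((n : ℤ) - (ζ : ℤ))) - q ^ (2 * (a : ℤ)))) := by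
  set b : ℤ := (n : ℤ) - (ζ : ℤ) with hb
  set F : ℤ → K := fun z => (q ^ (2 * i) - q ^ (2 * z)) / (q ^ (2 * b) - q ^ (2 * z))
    with hF
  have h1 : qfall q i (r + 1) / qfall q b (r + 1) =
      (q ^ (b - i)) ^ (r + 1) * ∏ a ∈ Finset.range (r + 1), F (a : ℤ) := by
    have hg := groupA hq hroot i b 0 (r + 1) (by
      intro t ht; simp only [Finset.mem_range] at ht; omega)
    rw [sub_zero, sub_zero] at hg
    rw [hg]
    congr 1
    refine Finset.prod_congr rfl fun t ht => ?_
    simp only [hF]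
    rw [zero_add]
  have h2 : qfall q (i - (n : ℤ) + (r : ℤ) - 1) (r - ζ - 1) /
      qfall q ((r : ℤ) - (ζ : ℤ) - 1) (r - ζ - 1) =
      (q ^ (b - i)) ^ (r - ζ - 1) * ∏ a ∈ Finset.Ico (n - r + 1) (n - ζ), F (a : ℤ) := by
    have hg := groupA hq hroot i b ((n - r + 1 : ℕ) : ℤ) (r - ζ - 1) (by
      intro t ht; simp only [Finset.mem_range] at ht; omega)
    rw [show i - ((n - r + 1 : ℕ) : ℤ) = i - (n : ℤ) + (r : ℤ) - 1 from by omega,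
      show b - ((n - r + 1 : ℕ) : ℤ) = (r : ℤ) - (ζ : ℤ) - 1 from by omega] at hg
    rw [hg]
    congr 1
    rw [reindex_up F (n - r + 1) (r - ζ - 1),
      show n - r + 1 + (r - ζ - 1) = n - ζ from by omega]
  have h3 : qfall q ((n : ℤ) - i) ζ / qfall q (ζ : ℤ) ζ =
      (q ^ (b - i)) ^ ζ * ∏ a ∈ Finset.Ioc (n - ζ) n, F (a : ℤ) := by
    have hg := groupB hq hroot i b (n : ℤ) ζ (by
      intro t ht; simp only [Finset.mem_range] at ht; omega)
    rw [show (n : ℤ) - b = (ζ : ℤ) from by omega] at hg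
    rw [hg]
    congr 1
    rw [reindex_down F n ζ (by omega)]
  have hsplit : (qfall q i (r + 1) * qfall q (i - (n : ℤ) + (r : ℤ) - 1) (r - ζ - 1) *
        qfall q ((n : ℤ) - i) ζ) /
      (qfall q b (r + 1) * qfall q ((r : ℤ) - (ζ : ℤ) - 1) (r - ζ - 1) *
        qfall q (ζ : ℤ) ζ) =
      (qfall q i (r + 1) / qfall q b (r + 1)) *
        (qfall q (i - (n : ℤ) + (r : ℤ) - 1) (r - ζ - 1) /
          qfall q ((r : ℤ) - (ζ : ℤ) - 1) (r - ζ - 1)) *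
        (qfall q ((n : ℤ) - i) ζ / qfall q (ζ : ℤ) ζ) := by
    rw [div_mul_div_comm, div_mul_div_comm]
  have hset : (Finset.range (r + 1) ∪ Finset.Ioc (n - r) n).erase (n - ζ) =
      (Finset.range (r + 1) ∪ Finset.Ico (n - r + 1) (n - ζ)) ∪ Finset.Ioc (n - ζ) n := by
    ext a
    simp only [Finset.mem_erase, Finset.mem_union, Finset.mem_range, Finset.mem_Ioc,
      Finset.mem_Ico]
    omega
  have hd1 : Disjoint (Finset.range (r + 1)) (Finset.Ico (n - r + 1) (n - ζ)) := by
    rw [Finset.disjoint_left]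
    intro a ha hmem
    simp only [Finset.mem_range, Finset.mem_Ico] at *
    omega
  have hd2 : Disjoint (Finset.range (r + 1) ∪ Finset.Ico (n - r + 1) (n - ζ))
      (Finset.Ioc (n - ζ) n) := by
    rw [Finset.disjoint_left]
    intro a ha hmem
    simp only [Finset.mem_union, Finset.mem_range, Finset.mem_Ico, Finset.mem_Ioc] at *
    omega
  have hpow : (q ^ (b - i)) ^ (2 * r) = (q ^ (2 * b - 2 * i)) ^ r := by
    rw [pow_mul]
    congr 1
    rw [← zpow_natCast (q ^ (b - i)) 2, ← zpow_mul]
    congr 1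
    push_cast
    ring
  rw [hsplit, h1, h2, h3, hset, Finset.prod_union hd2, Finset.prod_union hd1, ← hpow,
    show 2 * r = (r + 1) + (r - ζ - 1) + ζ from by omega, pow_add, pow_add]
  ring


lemma zpow_npow (hq : q ≠ 0) (a : ℤ) (k : ℕ) : (q ^ a) ^ k = q ^ (a * k) := by
  rw [← zpow_natCast (q ^ a) k, ← zpow_mul]

lemma lagrange_step (hq : q ≠ 0) (hroot : ∀ m : ℕ, 0 < m → q ^ m ≠ 1) (r n : ℕ)
    (hn : 2 * r + 1 ≤ n) (i : ℤ) (m : ℕ) (hm : m ≤ 2 * r) :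
    (q ^ (2 * i)) ^ m =
      ∑ a ∈ Finset.range (r + 1) ∪ Finset.Ioc (n - r) n,
        (q ^ (2 * (a : ℤ))) ^ m *
          ∏ b ∈ (Finset.range (r + 1) ∪ Finset.Ioc (n - r) n).erase a,
            ((q ^ (2 * (a : ℤ)) - q ^ (2 * (b : ℤ)))⁻¹ * (q ^ (2 * i) - q ^ (2 * (b : ℤ)))) := by
  set A : Finset ℕ := Finset.range (r + 1) ∪ Finset.Ioc (n - r) n with hA
  set v : ℕ → K := fun a => q ^ (2 * (a : ℤ)) with hv
  have hvs : Set.InjOn v A := by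
    intro a _ b _ hvab
    by_contra hab
    exact W_ne hq hroot (show (a : ℤ) ≠ (b : ℤ) from by exact_mod_cast hab) hvab
  have hd : Disjoint (Finset.range (r + 1)) (Finset.Ioc (n - r) n) := by
    rw [Finset.disjoint_left]
    intro a ha hb
    simp only [Finset.mem_range, Finset.mem_Ioc] at *
    omega
  have hcard : A.card = 2 * r + 1 := by
    rw [hA, Finset.card_union_of_disjoint hd, Finset.card_range, Nat.card_Ioc]
    omega
  have hdeg : (Polynomial.X ^ m : Polynomial K).degree < A.card := by
    rw [Polynomial.degree_X_pow, hcard]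
    exact_mod_cast Nat.lt_succ_of_le hm
  have h := Lagrange.eq_interpolate hvs hdeg
  have h2 := congrArg (Polynomial.eval (q ^ (2 * i))) h
  simp only [Polynomial.eval_pow, Polynomial.eval_X, Lagrange.interpolate_apply,
    Polynomial.eval_finset_sum, Polynomial.eval_mul, Polynomial.eval_C, Lagrange.basis,
    Polynomial.eval_prod, Lagrange.basisDivisor, Polynomial.eval_sub] at h2
  exact h2


lemma master (hq : q ≠ 0) (hroot : ∀ m : ℕ, 0 < m → q ^ m ≠ 1) (r n : ℕ)
    (hr : 1 ≤ r) (hn : 2 * r + 1 ≤ n) (i : ℤ) (m : ℕ) (hm : m ≤ 2 * r) :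
    q ^ (2 * i * ((m : ℤ) - (r : ℤ))) =
      (∑ ξ ∈ Finset.range (r + 1),
        ((qfall q i ξ * qfall q ((r : ℤ) - i) (r - ξ) * qfall q ((n : ℤ) - i) r) /
          (qfall q (ξ : ℤ) ξ * qfall q ((r : ℤ) - (ξ : ℤ)) (r - ξ) *
            qfall q ((n : ℤ) - (ξ : ℤ)) r)) * q ^ (2 * (ξ : ℤ) * ((m : ℤ) - (r : ℤ)))) +
      ∑ ζ ∈ Finset.range r,
        ((qfall q i (r + 1) * qfall q (i - (n : ℤ) + (r : ℤ) - 1) (r - ζ - 1) *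
            qfall q ((n : ℤ) - i) ζ) /
          (qfall q ((n : ℤ) - (ζ : ℤ)) (r + 1) * qfall q ((r : ℤ) - (ζ : ℤ) - 1) (r - ζ - 1) *
            qfall q (ζ : ℤ) ζ)) * q ^ (2 * ((n : ℤ) - (ζ : ℤ)) * ((m : ℤ) - (r : ℤ))) := by
  set A : Finset ℕ := Finset.range (r + 1) ∪ Finset.Ioc (n - r) n with hA
  set T : ℕ → K := fun a =>
    (q ^ (2 * (a : ℤ) - 2 * i)) ^ r *
      (∏ b ∈ A.erase a,
        ((q ^ (2 * i) - q ^ (2 * (b : ℤ))) / (q ^ (2 * (a : ℤ)) - q ^ (2 * (b : ℤ))))) *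
      q ^ (2 * (a : ℤ) * ((m : ℤ) - (r : ℤ))) with hT
  have hstep1 : (∑ ξ ∈ Finset.range (r + 1),
      ((qfall q i ξ * qfall q ((r : ℤ) - i) (r - ξ) * qfall q ((n : ℤ) - i) r) /
        (qfall q (ξ : ℤ) ξ * qfall q ((r : ℤ) - (ξ : ℤ)) (r - ξ) *
          qfall q ((n : ℤ) - (ξ : ℤ)) r)) * q ^ (2 * (ξ : ℤ) * ((m : ℤ) - (r : ℤ)))) =
      ∑ a ∈ Finset.range (r + 1), T a := by
    refine Finset.sum_congr rfl fun ξ hξ => ?_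
    simp only [Finset.mem_range] at hξ
    rw [coeffA hq hroot r n ξ (by omega) hn i, hT]
  have hstep2 : (∑ ζ ∈ Finset.range r,
      ((qfall q i (r + 1) * qfall q (i - (n : ℤ) + (r : ℤ) - 1) (r - ζ - 1) *
          qfall q ((n : ℤ) - i) ζ) /
        (qfall q ((n : ℤ) - (ζ : ℤ)) (r + 1) * qfall q ((r : ℤ) - (ζ : ℤ) - 1) (r - ζ - 1) *
          qfall q (ζ : ℤ) ζ)) * q ^ (2 * ((n : ℤ) - (ζ : ℤ)) * ((m : ℤ) - (r : ℤ)))) =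
      ∑ a ∈ Finset.Ioc (n - r) n, T a := by
    refine Finset.sum_nbij' (fun ζ => n - ζ) (fun a => n - a) ?_ ?_ ?_ ?_ ?_ <;>
      intro ζ hζ <;> simp only [Finset.mem_range, Finset.mem_Ioc] at hζ ⊢ <;> try omega
    have hcast : ((n - ζ : ℕ) : ℤ) = (n : ℤ) - (ζ : ℤ) := by omega
    rw [coeffB hq hroot r n ζ (by omega) hn i]
    simp only [hT, hA, hcast]
  have hd : Disjoint (Finset.range (r + 1)) (Finset.Ioc (n - r) n) := by
    rw [Finset.disjoint_left]
    intro a ha hb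
    simp only [Finset.mem_range, Finset.mem_Ioc] at *
    omega
  have hterm : ∀ a ∈ A, T a =
      q ^ (-(2 * i * (r : ℤ))) *
        ((q ^ (2 * (a : ℤ))) ^ m *
          ∏ b ∈ A.erase a,
            ((q ^ (2 * (a : ℤ)) - q ^ (2 * (b : ℤ)))⁻¹ *
              (q ^ (2 * i) - q ^ (2 * (b : ℤ))))) := by
    intro a _
    simp only [hT]
    have hprod : (∏ b ∈ A.erase a,
        ((q ^ (2 * i) - q ^ (2 * (b : ℤ))) / (q ^ (2 * (a : ℤ)) - q ^ (2 * (b : ℤ))))) =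
        ∏ b ∈ A.erase a,
          ((q ^ (2 * (a : ℤ)) - q ^ (2 * (b : ℤ)))⁻¹ * (q ^ (2 * i) - q ^ (2 * (b : ℤ)))) :=
      Finset.prod_congr rfl fun b _ => by rw [div_eq_mul_inv, mul_comm]
    have hconst : (q ^ (2 * (a : ℤ) - 2 * i)) ^ r * q ^ (2 * (a : ℤ) * ((m : ℤ) - (r : ℤ))) =
        q ^ (-(2 * i * (r : ℤ))) * (q ^ (2 * (a : ℤ))) ^ m := by
      rw [zpow_npow hq, zpow_npow hq, ← zpow_add₀ hq, ← zpow_add₀ hq]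
      congr 1
      ring
    rw [hprod, mul_right_comm, hconst, mul_assoc]
  rw [hstep1, hstep2, ← Finset.sum_union hd, ← hA, Finset.sum_congr rfl hterm,
    ← Finset.mul_sum]
  have hlag := lagrange_step hq hroot r n hn i m hm
  rw [← hA] at hlag
  rw [← hlag, zpow_npow hq, ← zpow_add₀ hq]
  congr 1
  ring

end Stmt4Aux

/-- for `n ≥ 2r+1 ≥ 3` and `S_i ∈ K^{2r+1}` with entries `(S_i)_j = q^{2ij}`
(`−r ≤ j ≤ r`), `q` not a root of unity, each `S_i` (`0 ≤ i ≤ n`) is the displayed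
combination of `S₀,…,S_r` and `S_{n−r+1},…,S_n` with falling `q`-factorial coefficients. -/
theorem stmt4 (K : Type) [Field K] (q : K) (hq : q ≠ 0)
    (hroot : ∀ m : ℕ, 0 < m → q ^ m ≠ 1)
    (r n : ℕ) (hr : 1 ≤ r) (hn : 2 * r + 1 ≤ n)
    (S : ℕ → Fin (2 * r + 1) → K)
    (hS : ∀ i ≤ n, ∀ j : Fin (2 * r + 1), S i j = q ^ (2 * (i : ℤ) * ((j : ℤ) - (r : ℤ)))) :
    ∀ i ≤ n,
      S i =
        (∑ ξ ∈ Finset.range (r + 1),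
          ((qfall q (i : ℤ) ξ * qfall q ((r : ℤ) - (i : ℤ)) (r - ξ) *
              qfall q ((n : ℤ) - (i : ℤ)) r) /
            (qfall q (ξ : ℤ) ξ * qfall q ((r : ℤ) - (ξ : ℤ)) (r - ξ) *
              qfall q ((n : ℤ) - (ξ : ℤ)) r)) • S ξ)
        +
        (∑ ζ ∈ Finset.range r,
          ((qfall q (i : ℤ) (r + 1) *
              qfall q ((i : ℤ) - (n : ℤ) + (r : ℤ) - 1) (r - ζ - 1) *
              qfall q ((n : ℤ) - (i : ℤ)) ζ) /
            (qfall q ((n : ℤ) - (ζ : ℤ)) (r + 1) *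
              qfall q ((r : ℤ) - (ζ : ℤ) - 1) (r - ζ - 1) *
              qfall q (ζ : ℤ) ζ)) • S (n - ζ)) := by
  intro i hi
  funext j
  have hj2 : (j : ℕ) < 2 * r + 1 := j.isLt
  have hmaster := Stmt4Aux.master hq hroot r n hr hn (i : ℤ) (j : ℕ) (by omega)
  simp only [Pi.add_apply, Finset.sum_apply, Pi.smul_apply, smul_eq_mul]
  rw [hS i hi j, hmaster]
  congr 1
  · refine Finset.sum_congr rfl fun ξ hξ => ?_
    simp only [Finset.mem_range] at hξ
    rw [hS ξ (by omega) j]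
  · refine Finset.sum_congr rfl fun ζ hζ => ?_
    simp only [Finset.mem_range] at hζ
    rw [hS (n - ζ) (by omega) j,
      show ((n - ζ : ℕ) : ℤ) = (n : ℤ) - (ζ : ℤ) from by omega]
end
end

section
/- In the algebra A (positive part of U_q(ŝl₂)) with generators x, y, let r be a positive integer and n ≥ 2r+1. Then for r+1 ≤ i ≤ n−r, the element x^i y^r x^{n−i} lies in the span of { x^ξ y^r x^{n−ξ} : 0 ≤ ξ ≤ r } together with { x^{n−ζ} y^r x^ζ : 0 ≤ ζ ≤ r−1 }. -/
noncomputable section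

/-!
Let `τ` be the automorphism `x ↦ q²x, y ↦ q⁻²y` of `𝒜` and `D u = x u - τ(u) x`, a `τ`-twisted
derivation. The `x`-Serre relation says exactly `D³ y = 0`, and the twisted Leibniz rule then gives
`D^{2r+1} (y^r) = 0`. Since `τ` acts on `x^j y^r x^s` by the scalar `q^{2(j+s-r)}`, expanding
`D^{2r+1} (y^r)` in middle words shows that the linear map `X^j ↦ x^j y^r x^{n-j}` kills every
multiple of degree `≤ n` of `P = ∏_{d ≤ 2r} (X - q^{2(d-r)})`. So `x^i y^r x^{n-i}` is a combination
of the `x^{p_j} y^r x^{n-p_j}` once `X^i` is congruent mod `P` to a combination of the `X^{p_j}`,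
which holds when the matrix `(q^{2(d-r) p_j})` is invertible; for `p_j ∈ {0,…,r} ∪ {n-r+1,…,n}`
it is a rescaled Vandermonde matrix in the distinct values `q^{2p_j}`.
-/

open Polynomial

section Interpolation

variable {K V : Type*} [Field K] [AddCommGroup V] [Module K V]

theorem natDegree_prod_X_sub_C {ι : Type*} (s : Finset ι) (t : ι → K) :
    (∏ k ∈ s, (X - C (t k))).natDegree = s.card := by
  rw [natDegree_prod_of_monic _ _ fun k _ => monic_X_sub_C _]
  simp

theorem exists_prod_X_sub_C_dvd_X_pow_sub_sum {N : ℕ} {t : Fin N → K} {p : Fin N → ℕ}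
    (ht : (Matrix.of fun k j => t k ^ p j).det ≠ 0) (i : ℕ) :
    ∃ a : Fin N → K, (∏ k, (X - C (t k))) ∣ X ^ i - ∑ j, C (a j) * X ^ p j := by
  obtain ⟨a, ha⟩ := Matrix.mulVec_surjective_iff_isUnit.mpr
    ((Matrix.isUnit_iff_isUnit_det _).mpr ht.isUnit) fun k => t k ^ i
  have ht_inj : Function.Injective t := fun k k' hkk' => by
    by_contra hne
    exact ht (Matrix.det_zero_of_row_eq hne (funext fun j => by simp [hkk']))
  refine ⟨a, Finset.prod_dvd_of_coprime ((pairwise_coprime_X_sub_C ht_inj).set_pairwise _)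
    fun k _ => ?_⟩
  rw [dvd_iff_isRoot, IsRoot, eval_sub, eval_finsetSum, sub_eq_zero]
  have := congrFun ha k
  simp only [Matrix.mulVec, dotProduct, Matrix.of_apply] at this
  simp only [eval_pow, eval_X, eval_mul, eval_C, ← this, mul_comm]

theorem mem_span_of_map_X_pow_mul_prod_X_sub_C_eq_zero {N n : ℕ} {t : Fin N → K}
    {p : Fin N → ℕ} (ht : (Matrix.of fun k j => t k ^ p j).det ≠ 0) (hp : ∀ j, p j ≤ n)
    (Φ : K[X] →ₗ[K] V) (hΦ : ∀ b, b + N ≤ n → Φ (X ^ b * ∏ k, (X - C (t k))) = 0)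
    {i : ℕ} (hi : i ≤ n) :
    Φ (X ^ i) ∈ Submodule.span K (Set.range fun j => Φ (X ^ p j)) := by
  obtain ⟨a, R, hR⟩ := exists_prod_X_sub_C_dvd_X_pow_sub_sum ht i
  have hΦR : Φ ((∏ k, (X - C (t k))) * R) = 0 := by
    rcases eq_or_ne R 0 with rfl | hR0
    · simp
    have hdeg : (X ^ i - ∑ j, C (a j) * X ^ p j : K[X]).natDegree ≤ n :=
      (natDegree_sub_le _ _).trans <| max_le (by simpa using hi) <|
        natDegree_sum_le_of_forall_le _ _ fun j _ => (natDegree_C_mul_X_pow_le _ _).trans (hp j)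
    have hmonic : (∏ k, (X - C (t k))).Monic := monic_prod_of_monic _ _ fun k _ => monic_X_sub_C _
    rw [hR, hmonic.natDegree_mul' hR0, natDegree_prod_X_sub_C, Finset.card_univ,
      Fintype.card_fin] at hdeg
    rw [as_sum_range_C_mul_X_pow R, Finset.mul_sum, map_sum]
    refine Finset.sum_eq_zero fun b hb => ?_
    rw [Finset.mem_range] at hb
    rw [mul_left_comm, C_mul', map_smul, mul_comm, hΦ b (by omega), smul_zero]
  rw [← hR, map_sub, map_sum, sub_eq_zero] at hΦR
  rw [hΦR]
  exact Submodule.sum_mem _ fun j _ => by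
    rw [C_mul', map_smul]
    exact Submodule.smul_mem _ _ (Submodule.subset_span ⟨j, rfl⟩)

theorem det_pow_mul_geom_ne_zero {N : ℕ} {c ρ : K} (hc : c ≠ 0) {p : Fin N → ℕ}
    (hp : Function.Injective fun j => ρ ^ p j) :
    (Matrix.of fun k j : Fin N => (c * ρ ^ (k : ℕ)) ^ p j).det ≠ 0 := by
  have hfactor : (Matrix.of fun k j : Fin N => (c * ρ ^ (k : ℕ)) ^ p j) =
      (Matrix.vandermonde fun j => ρ ^ p j).transpose * Matrix.diagonal fun j => c ^ p j := by
    ext k j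
    simp [Matrix.vandermonde_apply, mul_pow, ← pow_mul, mul_comm]
  rw [hfactor, Matrix.det_mul, Matrix.det_transpose, Matrix.det_diagonal]
  exact mul_ne_zero (Matrix.det_vandermonde_ne_zero_iff.mpr hp)
    (Finset.prod_ne_zero_iff.mpr fun j _ => pow_ne_zero _ hc)

theorem pow_injective_of_pow_ne_one {ρ : K} (hρ : ρ ≠ 0) (hρ1 : ∀ m, 0 < m → ρ ^ m ≠ 1) :
    Function.Injective (ρ ^ · : ℕ → K) := by
  have : ¬IsOfFinOrder (Units.mk0 ρ hρ) := by
    rw [isOfFinOrder_iff_pow_eq_one]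
    rintro ⟨m, hm, h⟩
    exact hρ1 m hm (by simpa [Units.ext_iff] using h)
  exact fun a b h => injective_pow_iff_not_isOfFinOrder.mpr this (Units.ext (by simpa using h))

end Interpolation

namespace QSerre

variable {K : Type} [Field K] {q : K}

local notation "𝐱" => Xq K q
local notation "𝐲" => Yq K q

theorem qthree_eq (hq : q ≠ 0) (hq2 : q ^ 2 ≠ 1) : qthree q = q ^ 2 + 1 + (q ^ 2)⁻¹ := by
  have hsub : q - q⁻¹ ≠ 0 := fun h => hq2 <| by
    field_simp at h
    linear_combination h
  rw [qthree, div_eq_iff hsub]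
  field_simp
  ring

theorem serre_X :
    𝐱 ^ 3 * 𝐲 - qthree q • (𝐱 ^ 2 * 𝐲 * 𝐱) + qthree q • (𝐱 * 𝐲 * 𝐱 ^ 2) - 𝐲 * 𝐱 ^ 3 = 0 := by
  simpa [Xq, Yq] using RingQuot.mkAlgHom_rel K (QSerreRel.xrel (K := K) (q := q))

theorem serre_Y :
    𝐲 ^ 3 * 𝐱 - qthree q • (𝐲 ^ 2 * 𝐱 * 𝐲) + qthree q • (𝐲 * 𝐱 * 𝐲 ^ 2) - 𝐱 * 𝐲 ^ 3 = 0 := by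
  simpa [Xq, Yq] using RingQuot.mkAlgHom_rel K (QSerreRel.yrel (K := K) (q := q))

variable (K q) in
def tau : QSerreAlg K q →ₐ[K] QSerreAlg K q :=
  RingQuot.liftAlgHom K ⟨FreeAlgebra.lift K ![(q ^ 2) • Xq K q, (q ^ 2)⁻¹ • Yq K q], by
    rintro _ _ (_ | _) <;>
      simp only [Xf, Yf, map_sub, map_add, map_mul, map_smul, map_pow, map_zero,
        FreeAlgebra.lift_ι_apply, Matrix.cons_val_zero, Matrix.cons_val_one,
        _root_.smul_pow, smul_mul_assoc, mul_smul_comm, smul_smul]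
    · linear_combination (norm := (match_scalars <;> ring))
        ((q ^ 2) ^ 3 * (q ^ 2)⁻¹) • serre_X (q := q)
    · linear_combination (norm := (match_scalars <;> ring))
        (q ^ 2 * ((q ^ 2)⁻¹) ^ 3) • serre_Y (q := q)⟩

theorem tau_Xq : tau K q 𝐱 = (q ^ 2) • 𝐱 := by
  simp [tau, Xq, Xf]

theorem tau_Yq : tau K q 𝐲 = (q ^ 2)⁻¹ • 𝐲 := by
  simp [tau, Yq, Yf]

variable (K q) in
def twistedAd : QSerreAlg K q →ₗ[K] QSerreAlg K q :=
  LinearMap.mulLeft K (Xq K q) - LinearMap.mulRight K (Xq K q) ∘ₗ (tau K q).toLinearMap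

local notation "𝐃" => twistedAd K q

theorem twistedAd_apply (u : QSerreAlg K q) : 𝐃 u = 𝐱 * u - tau K q u * 𝐱 := rfl

theorem twistedAd_mul (u v : QSerreAlg K q) : 𝐃 (u * v) = 𝐃 u * v + tau K q u * 𝐃 v := by
  simp only [twistedAd_apply, map_mul, sub_mul, mul_sub, mul_assoc]
  abel

theorem tau_twistedAd (u : QSerreAlg K q) : tau K q (𝐃 u) = q ^ 2 • 𝐃 (tau K q u) := by
  simp only [twistedAd_apply, map_sub, map_mul, tau_Xq, smul_mul_assoc, mul_smul_comm, smul_sub]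

theorem pow_twistedAd_tau (hq : q ≠ 0) (k : ℕ) (u : QSerreAlg K q) :
    (𝐃 ^ k) (tau K q u) = ((q ^ 2)⁻¹) ^ k • tau K q ((𝐃 ^ k) u) := by
  induction k generalizing u with
  | zero => simp
  | succ k ih =>
    have hD : 𝐃 (tau K q u) = (q ^ 2)⁻¹ • tau K q (𝐃 u) := by
      rw [tau_twistedAd, smul_smul, inv_mul_cancel₀ (pow_ne_zero 2 hq), one_smul]
    rw [pow_succ, Module.End.mul_apply, hD, map_smul, ih, smul_smul, ← pow_succ',
      Module.End.mul_apply]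

theorem pow_twistedAd_mul_eq_zero (hq : q ≠ 0) {a b : ℕ} {u v : QSerreAlg K q}
    (hu : (𝐃 ^ (a + 1)) u = 0) (hv : (𝐃 ^ (b + 1)) v = 0) : (𝐃 ^ (a + b + 1)) (u * v) = 0 := by
  induction hs : a + b generalizing a b u v with
  | zero =>
    obtain ⟨rfl, rfl⟩ : a = 0 ∧ b = 0 := by omega
    simp_all [twistedAd_mul]
  | succ s ih =>
    rw [pow_succ, Module.End.mul_apply, twistedAd_mul, map_add]
    have hleft : (𝐃 ^ (s + 1)) (𝐃 u * v) = 0 := by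
      rcases a with _ | a
      · simp_all
      · rw [pow_succ, Module.End.mul_apply] at hu
        exact ih hu hv (by omega)
    have hright : (𝐃 ^ (s + 1)) (tau K q u * 𝐃 v) = 0 := by
      rcases b with _ | b
      · simp_all
      · rw [pow_succ, Module.End.mul_apply] at hv
        have hτu : (𝐃 ^ (a + 1)) (tau K q u) = 0 := by simp [pow_twistedAd_tau hq, hu]
        exact ih hτu hv (by omega)
    rw [hleft, hright, add_zero]

theorem pow_three_twistedAd_Yq (hq : q ≠ 0) (hq2 : q ^ 2 ≠ 1) : (𝐃 ^ 3) 𝐲 = 0 := by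
  have hs := serre_X (q := q)
  rw [qthree_eq hq hq2] at hs
  simp only [pow_succ, pow_zero, one_mul, Module.End.mul_apply]
  simp only [twistedAd_apply, map_sub, map_mul, map_smul, tau_Xq, tau_Yq, smul_mul_assoc,
    mul_smul_comm, smul_smul, smul_sub, mul_assoc]
  simp only [pow_succ, pow_zero, one_mul, mul_assoc] at hs
  linear_combination (norm := (match_scalars <;> field_simp <;> ring)) hs

theorem pow_twistedAd_Yq_pow (hq : q ≠ 0) (hq2 : q ^ 2 ≠ 1) (r : ℕ) :
    (𝐃 ^ (2 * r + 1)) (𝐲 ^ r) = 0 := by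
  induction r with
  | zero => simp [twistedAd_apply]
  | succ r ih =>
    rw [pow_succ' 𝐲, show 2 * (r + 1) + 1 = 2 + 2 * r + 1 by ring]
    exact pow_twistedAd_mul_eq_zero hq (pow_three_twistedAd_Yq hq hq2) ih

variable (q) in
def weight (r d : ℕ) : K := ((q ^ 2) ^ r)⁻¹ * (q ^ 2) ^ d

variable (K q) in
def midEval (r m : ℕ) : K[X] →ₗ[K] QSerreAlg K q :=
  ∑ j ∈ Finset.range (m + 1), (lcoeff K j).smulRight (Xq K q ^ j * Yq K q ^ r * Xq K q ^ (m - j))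

variable {r : ℕ}

theorem midEval_apply (m : ℕ) (Q : K[X]) :
    midEval K q r m Q = ∑ j ∈ Finset.range (m + 1), Q.coeff j • (𝐱 ^ j * 𝐲 ^ r * 𝐱 ^ (m - j)) := by
  simp [midEval]

theorem midEval_X_pow {m j : ℕ} (hj : j ≤ m) :
    midEval K q r m (X ^ j) = 𝐱 ^ j * 𝐲 ^ r * 𝐱 ^ (m - j) := by
  simp [midEval_apply, coeff_X_pow, Finset.mem_range.mpr (Nat.lt_succ_of_le hj)]

theorem midEval_X_mul (m : ℕ) (Q : K[X]) :
    midEval K q r (m + 1) (X * Q) = 𝐱 * midEval K q r m Q := by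
  simp [midEval_apply, Finset.sum_range_succ' _ (m + 1), coeff_X_mul, Finset.mul_sum, pow_succ',
    mul_assoc]

theorem midEval_X_pow_mul (m a : ℕ) (Q : K[X]) :
    midEval K q r (m + a) (X ^ a * Q) = 𝐱 ^ a * midEval K q r m Q := by
  induction a with
  | zero => simp
  | succ a ih => rw [← add_assoc, pow_succ', mul_assoc, midEval_X_mul, ih, pow_succ', mul_assoc]

theorem midEval_succ {m : ℕ} {Q : K[X]} (hQ : Q.natDegree ≤ m) :
    midEval K q r (m + 1) Q = midEval K q r m Q * 𝐱 := by
  rw [midEval_apply, Finset.sum_range_succ, coeff_eq_zero_of_natDegree_lt (by omega), zero_smul,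
    add_zero, midEval_apply, Finset.sum_mul]
  refine Finset.sum_congr rfl fun j hj => ?_
  rw [Finset.mem_range] at hj
  rw [smul_mul_assoc, mul_assoc _ (𝐱 ^ (m - j)), ← pow_succ, Nat.sub_add_comm (by omega)]

theorem midEval_add {m : ℕ} {Q : K[X]} (hQ : Q.natDegree ≤ m) (s : ℕ) :
    midEval K q r (m + s) Q = midEval K q r m Q * 𝐱 ^ s := by
  induction s with
  | zero => simp
  | succ s ih => rw [← add_assoc, midEval_succ (by omega), ih, pow_succ, mul_assoc]

theorem tau_midEval (m : ℕ) (Q : K[X]) :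
    tau K q (midEval K q r m Q) = weight q r m • midEval K q r m Q := by
  rw [midEval_apply, map_sum, Finset.smul_sum]
  refine Finset.sum_congr rfl fun j hj => ?_
  rw [Finset.mem_range] at hj
  simp only [map_smul, map_mul, map_pow, tau_Xq, tau_Yq, _root_.smul_pow, smul_mul_assoc,
    mul_smul_comm, smul_smul, weight]
  congr 1
  rw [inv_pow, ← Nat.sub_add_cancel (Nat.le_of_lt_succ hj), pow_add, Nat.add_sub_cancel]
  ring

theorem twistedAd_midEval {m : ℕ} {Q : K[X]} (hQ : Q.natDegree ≤ m) :
    𝐃 (midEval K q r m Q) = midEval K q r (m + 1) ((X - C (weight q r m)) * Q) := by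
  rw [twistedAd_apply, tau_midEval, sub_mul, C_mul', smul_mul_assoc, map_sub, map_smul,
    midEval_X_mul, midEval_succ hQ]

theorem pow_twistedAd_Yq_pow_eq (m : ℕ) :
    (𝐃 ^ m) (𝐲 ^ r) = midEval K q r m (∏ d ∈ Finset.range m, (X - C (weight q r d))) := by
  induction m with
  | zero => simp [midEval_apply]
  | succ m ih =>
    rw [pow_succ', Module.End.mul_apply, ih,
      twistedAd_midEval (by rw [natDegree_prod_X_sub_C, Finset.card_range]), Finset.prod_range_succ,
      mul_comm]

theorem midEval_X_pow_mul_prod_eq_zero (hq : q ≠ 0) (hq2 : q ^ 2 ≠ 1) {b n : ℕ}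
    (hb : b + (2 * r + 1) ≤ n) :
    midEval K q r n (X ^ b * ∏ d ∈ Finset.range (2 * r + 1), (X - C (weight q r d))) = 0 := by
  obtain ⟨s, rfl⟩ : ∃ s, n = 2 * r + 1 + s + b := ⟨n - b - (2 * r + 1), by omega⟩
  rw [midEval_X_pow_mul,
    midEval_add (by rw [natDegree_prod_X_sub_C, Finset.card_range]), ← pow_twistedAd_Yq_pow_eq,
    pow_twistedAd_Yq_pow hq hq2, zero_mul, mul_zero]

theorem middleWord_mem_span_range (hq : q ≠ 0) (hroot : ∀ m : ℕ, 0 < m → q ^ m ≠ 1) {n : ℕ}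
    {p : Fin (2 * r + 1) → ℕ} (hp : ∀ j, p j ≤ n) (hp_inj : Function.Injective p) {i : ℕ}
    (hi : i ≤ n) :
    𝐱 ^ i * 𝐲 ^ r * 𝐱 ^ (n - i) ∈
      Submodule.span K (Set.range fun j => 𝐱 ^ p j * 𝐲 ^ r * 𝐱 ^ (n - p j)) := by
  have hq2_pow : ∀ m, 0 < m → (q ^ 2) ^ m ≠ 1 := fun m hm => by
    rw [← pow_mul]
    exact hroot _ (by omega)
  have hdet : (Matrix.of fun k j : Fin (2 * r + 1) => weight q r k ^ p j).det ≠ 0 :=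
    det_pow_mul_geom_ne_zero (inv_ne_zero (pow_ne_zero r (pow_ne_zero 2 hq)))
      ((pow_injective_of_pow_ne_one (pow_ne_zero 2 hq) hq2_pow).comp hp_inj)
  have hmem := mem_span_of_map_X_pow_mul_prod_X_sub_C_eq_zero hdet hp (midEval K q r n)
    (fun b hb => by
      rw [Fin.prod_univ_eq_prod_range (fun d => X - C (weight q r d))]
      exact midEval_X_pow_mul_prod_eq_zero hq (hroot 2 two_pos) hb) hi
  simpa only [midEval_X_pow hi, midEval_X_pow (hp _)] using hmem

end QSerre

open QSerre in
theorem stmt5_general (K : Type) [Field K]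
    (q : K) (hq : q ≠ 0) (hroot : ∀ m : ℕ, 0 < m → q ^ m ≠ 1)
    (r n : ℕ) (hn : 2 * r + 1 ≤ n)
    (i : ℕ) (hi2 : i + r ≤ n) :
    Xq K q ^ i * Yq K q ^ r * Xq K q ^ (n - i) ∈
      Submodule.span K
        ({a | ∃ ξ ≤ r, a = Xq K q ^ ξ * Yq K q ^ r * Xq K q ^ (n - ξ)} ∪
          {a | ∃ ζ < r, a = Xq K q ^ (n - ζ) * Yq K q ^ r * Xq K q ^ ζ}) := by
  let p : Fin (2 * r + 1) → ℕ := fun j => if (j : ℕ) ≤ r then j else n - (2 * r - j)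
  have hp_le : ∀ j, p j ≤ n := fun j => by dsimp only [p]; split <;> omega
  have hp_inj : Function.Injective p := fun j j' h => by
    dsimp only [p] at h
    ext
    split at h <;> split at h <;> omega
  refine Submodule.span_mono ?_ (middleWord_mem_span_range hq hroot hp_le hp_inj (by omega))
  rintro _ ⟨j, rfl⟩
  by_cases hj : (j : ℕ) ≤ r
  · exact Or.inl ⟨j, hj, by simp [p, hj]⟩
  · refine Or.inr ⟨2 * r - j, by omega, ?_⟩
    simp only [p, hj, if_false, Nat.sub_sub_self (by omega : 2 * r - j ≤ n)]

/-- in `𝒜`, for `r ≥ 1`, `n ≥ 2r+1` and `r+1 ≤ i ≤ n−r`, the element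
`x^i y^r x^{n−i}` lies in the span of `{x^ξ y^r x^{n−ξ} : 0 ≤ ξ ≤ r}` together with
`{x^{n−ζ} y^r x^ζ : 0 ≤ ζ ≤ r−1}`. -/
theorem stmt5 (K : Type) [Field K] [IsAlgClosed K] [CharZero K]
    (q : K) (hq : q ≠ 0) (hroot : ∀ m : ℕ, 0 < m → q ^ m ≠ 1)
    (r n : ℕ) (hr : 1 ≤ r) (hn : 2 * r + 1 ≤ n)
    (i : ℕ) (hi1 : r + 1 ≤ i) (hi2 : i + r ≤ n) :
    Xq K q ^ i * Yq K q ^ r * Xq K q ^ (n - i) ∈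
      Submodule.span K
        ({a | ∃ ξ ≤ r, a = Xq K q ^ ξ * Yq K q ^ r * Xq K q ^ (n - ξ)} ∪
          {a | ∃ ζ < r, a = Xq K q ^ (n - ζ) * Yq K q ^ r * Xq K q ^ ζ}) :=
  stmt5_general K q hq hroot r n hn i hi2
end
end

section
/- For each n ≥ 0, the number of irreducible words of length n in {x,y} equals the number of pairs (λ, μ) where λ is a partition into distinct parts, μ is an arbitrary partition, and |λ| + |μ| = n. Explicitly, the map sending (λ=(λ₁>⋯>λ_r), μ=(μ₁≥⋯≥μ_s)) to the word ⋯x^{λ₄}y^{λ₃}x^{λ₂}y^{λ₁}x^{μ₁}y^{μ₂}x^{μ₃}⋯ (alternating blocks, with λ written right-to-left before the μ blocks) is a bijection onto the irreducible words of length n. -/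
/-- Auxiliary function for computing the run-length signature of a word. -/
def sigAux : Bool → ℕ → List Bool → List ℕ
  | _, k, [] => [k]
  | b, k, a :: rest => if a = b then sigAux b (k + 1) rest else k :: sigAux a 1 rest

/-- The signature of a word: the sequence of lengths of its maximal runs
of a single letter. -/
def signatureW : List Bool → List ℕ
  | [] => []
  | a :: rest => sigAux a 1 rest

/-- A signature `(i₁, …, i_r)` is reducible whenever there is an index `s`
(`2 ≤ s ≤ r−1`, one-based) with `i_{s−1} ≥ i_s < i_{s+1}`; here `t` is the
zero-based index of `i_s`. -/
def ReducibleSig (s : List ℕ) : Prop :=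
  ∃ t, 1 ≤ t ∧ t + 1 < s.length ∧ s.getD t 0 ≤ s.getD (t - 1) 0 ∧ s.getD t 0 < s.getD (t + 1) 0

/-- A word is irreducible whenever its signature is not reducible. -/
def IrredWord (w : List Bool) : Prop := ¬ ReducibleSig (signatureW w)

/-- The word with alternating blocks of the given lengths, starting with the given
letter (`true` = `x`, `false` = `y`). -/
def altWord : Bool → List ℕ → List Bool
  | _, [] => []
  | b, a :: rest => List.replicate a b ++ altWord (!b) rest

/-- The set `Y_n` of pairs `(λ, μ)` with `λ` a partition into mutually distinct parts,
`μ` an arbitrary partition, and `|λ| + |μ| = n` (partitions as weakly decreasing lists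
of positive integers, `λ` strictly decreasing). -/
def Yset (n : ℕ) : Set (List ℕ × List ℕ) :=
  {p | p.1.Pairwise (· > ·) ∧ (∀ a ∈ p.1, 0 < a) ∧
       p.2.Pairwise (· ≥ ·) ∧ (∀ a ∈ p.2, 0 < a) ∧ p.1.sum + p.2.sum = n}

/-- The set of irreducible words of length `n`. -/
def Wset (n : ℕ) : Set (List Bool) := {w | w.length = n ∧ IrredWord w}

/-- The map sending `(λ = (λ₁ > ⋯ > λ_r), μ = (μ₁ ≥ ⋯ ≥ μ_s))` to the word
`⋯x^{λ₄}y^{λ₃}x^{λ₂}y^{λ₁}x^{μ₁}y^{μ₂}x^{μ₃}⋯` (alternating blocks, the `λ` blocks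
written right-to-left before the `μ` blocks, the `λ₁` block being a `y`-block and the
`μ₁` block an `x`-block). -/
def lamMuWord (p : List ℕ × List ℕ) : List Bool :=
  altWord (decide (p.1.length % 2 = 0)) (p.1.reverse ++ p.2)

/-!
A word is determined by its first letter and its signature, and the word of `(λ, μ)` has
signature `λ` reversed followed by `μ`. A nonempty irreducible signature rises strictly to a
peak and then weakly decreases, so it has exactly two splits into a strictly increasing prefix
and a weakly decreasing suffix, one on each side of the peak. Their prefix lengths differ by one,
and the first letter of the word, which records the parity of the prefix length, picks one.
-/

lemma sigAux_replicate_append (a : ℕ) (b : Bool) (k : ℕ) (rest : List Bool) :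
    sigAux b k (List.replicate a b ++ rest) = sigAux b (k + a) rest := by
  induction a generalizing k with
  | zero => rfl
  | succ a ih => simp [List.replicate_succ, sigAux, ih, Nat.add_right_comm, Nat.add_assoc]

lemma altWord_sigAux (rest : List Bool) (b : Bool) (k : ℕ) :
    altWord b (sigAux b k rest) = List.replicate k b ++ rest := by
  induction rest generalizing b k with
  | nil => simp [sigAux, altWord]
  | cons a rest ih =>
    by_cases h : a = b
    · subst h
      simp [sigAux, ih, List.replicate_succ']
    · have hb : (!b) = a := by cases a <;> cases b <;> simp_all
      simp [sigAux, h, altWord, hb, ih]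

lemma pos_of_mem_sigAux (rest : List Bool) (b : Bool) {k : ℕ} (hk : 0 < k) :
    ∀ x ∈ sigAux b k rest, 0 < x := by
  induction rest generalizing b k with
  | nil => simpa [sigAux] using hk
  | cons a rest ih =>
    by_cases h : a = b
    · simpa [sigAux, h] using ih a (k.succ_pos)
    · simpa [sigAux, h, hk] using ih a one_pos

lemma sigAux_altWord_not (L : List ℕ) (hL : ∀ x ∈ L, 0 < x) (b : Bool) (k : ℕ) :
    sigAux b k (altWord (!b) L) = k :: L := by
  induction L generalizing b k with
  | nil => rfl
  | cons a L ih =>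
    obtain ⟨a, rfl⟩ := Nat.exists_eq_add_of_lt (hL _ List.mem_cons_self)
    have := ih (fun x hx => hL x (List.mem_cons_of_mem _ hx)) (!b) (a + 1)
    simp_all [altWord, List.replicate_succ, sigAux, sigAux_replicate_append, Nat.add_comm]

lemma signatureW_altWord (b : Bool) (L : List ℕ) (hL : ∀ x ∈ L, 0 < x) :
    signatureW (altWord b L) = L := by
  cases L with
  | nil => rfl
  | cons a L =>
    obtain ⟨a, rfl⟩ := Nat.exists_eq_add_of_lt (hL _ List.mem_cons_self)
    have := sigAux_altWord_not L (fun x hx => hL x (List.mem_cons_of_mem _ hx)) b (a + 1)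
    simp_all [altWord, List.replicate_succ, signatureW, sigAux_replicate_append, Nat.add_comm]

lemma length_altWord (b : Bool) (L : List ℕ) : (altWord b L).length = L.sum := by
  induction L generalizing b with
  | nil => rfl
  | cons a L ih => simp [altWord, ih]

lemma head?_altWord (b : Bool) {L : List ℕ} (hL : ∀ x ∈ L, 0 < x) (hne : L ≠ []) :
    (altWord b L).head? = some b := by
  obtain ⟨a, L, rfl⟩ := List.exists_cons_of_ne_nil hne
  obtain ⟨a, rfl⟩ := Nat.exists_eq_add_of_lt (hL _ List.mem_cons_self)
  simp [altWord, List.replicate_succ]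

lemma not_reducibleSig_of_length_le_two {s : List ℕ} (hs : s.length ≤ 2) : ¬ ReducibleSig s :=
  fun ⟨_, ht, hlt, _⟩ => by omega

lemma reducibleSig_cons_cons_cons (a b c : ℕ) (r : List ℕ) :
    ReducibleSig (a :: b :: c :: r) ↔ (b ≤ a ∧ b < c) ∨ ReducibleSig (b :: c :: r) := by
  constructor
  · rintro ⟨_ | _ | t, ht, hlt, hle, hgt⟩
    · omega
    · exact Or.inl ⟨hle, hgt⟩
    · exact Or.inr ⟨t + 1, by omega, by simpa using hlt, by simpa using hle, by simpa using hgt⟩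
  · rintro (⟨hle, hgt⟩ | ⟨_ | t, ht, hlt, hle, hgt⟩)
    · exact ⟨1, le_rfl, by simp, hle, hgt⟩
    · omega
    · exact ⟨t + 2, by omega, by simpa using hlt, by simpa using hle, by simpa using hgt⟩

lemma reducibleSig_cons {s : List ℕ} (h : ReducibleSig s) (a : ℕ) : ReducibleSig (a :: s) := by
  match s, h with
  | b :: c :: d :: r, h => exact (reducibleSig_cons_cons_cons a b c (d :: r)).2 (Or.inr h)
  | [], h | [_], h | [_, _], h => exact absurd h (not_reducibleSig_of_length_le_two (by simp))

lemma not_reducibleSig_of_pairwise_ge :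
    ∀ {M : List ℕ}, M.Pairwise (· ≥ ·) → ¬ ReducibleSig M
  | a :: b :: c :: r, hM => by
    rw [reducibleSig_cons_cons_cons]
    rintro (⟨-, hbc⟩ | hr)
    · exact absurd (List.rel_of_pairwise_cons hM.of_cons List.mem_cons_self) (by omega)
    · exact not_reducibleSig_of_pairwise_ge hM.of_cons hr
  | [], _ | [_], _ | [_, _], _ => not_reducibleSig_of_length_le_two (by simp)

lemma not_reducibleSig_append :
    ∀ {L M : List ℕ}, L.Pairwise (· < ·) → M.Pairwise (· ≥ ·) → ¬ ReducibleSig (L ++ M)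
  | [], _, _, hM => not_reducibleSig_of_pairwise_ge hM
  | a :: L, M, hL, hM => by
    have ih := not_reducibleSig_append hL.of_cons hM
    match hLM : L ++ M with
    | b :: c :: r =>
      rw [List.cons_append, hLM, reducibleSig_cons_cons_cons]
      rintro (⟨hba, hbc⟩ | hr)
      · cases L with
        | nil =>
          subst hLM
          exact absurd (List.rel_of_pairwise_cons hM List.mem_cons_self) (by omega)
        | cons l L =>
          obtain ⟨rfl, -⟩ := List.cons.inj hLM
          exact absurd (List.rel_of_pairwise_cons hL List.mem_cons_self) (by omega)
      · exact ih (hLM ▸ hr)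
    | [] | [_] =>
      rw [List.cons_append, hLM]
      exact not_reducibleSig_of_length_le_two (by simp)

lemma exists_peak_of_not_reducibleSig :
    ∀ {s : List ℕ}, s ≠ [] → ¬ ReducibleSig s →
      ∃ L p M, s = L ++ p :: M ∧ (L ++ [p]).IsChain (· < ·) ∧ (p :: M).IsChain (· ≥ ·)
  | [a], _, _ => ⟨[], a, [], rfl, by simp, by simp⟩
  | a :: b :: t, _, hirr => by
    obtain ⟨L, p, M, hbt, hinc, hdec⟩ := exists_peak_of_not_reducibleSig (List.cons_ne_nil b t)
      (fun h => hirr (reducibleSig_cons h a))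
    rw [hbt]
    match L with
    | [] =>
      by_cases hap : a < p
      · exact ⟨[a], p, M, rfl, by simpa using hap, hdec⟩
      · exact ⟨[], a, p :: M, rfl, by simp, List.IsChain.cons_cons (by omega) hdec⟩
    | l :: L =>
      by_cases hal : a < l
      · exact ⟨a :: l :: L, p, M, rfl, List.IsChain.cons_cons hal hinc, hdec⟩
      · obtain ⟨c, r, hcr, hlc⟩ : ∃ c r, L ++ p :: M = c :: r ∧ l < c := by
          cases L with
          | nil => exact ⟨p, M, rfl, by simpa using hinc⟩
          | cons c L => exact ⟨c, L ++ p :: M, rfl, (List.isChain_cons_cons.1 hinc).1⟩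
        rw [hbt, List.cons_append, hcr] at hirr
        exact absurd ((reducibleSig_cons_cons_cons a l c r).2 (Or.inl ⟨by omega, hlc⟩)) hirr

lemma length_le_length_add_one_of_append_eq {L₁ M₁ L₂ M₂ : List ℕ} (h : L₁ ++ M₁ = L₂ ++ M₂)
    (hL₁ : L₁.Pairwise (· < ·)) (hM₂ : M₂.Pairwise (· ≥ ·)) :
    L₁.length ≤ L₂.length + 1 := by
  by_contra hlen
  obtain ⟨C, rfl, rfl⟩ | ⟨C, rfl, rfl⟩ := List.append_eq_append_iff.1 h
  · simp only [List.length_append] at hlen; omega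
  · match C, hlen with
    | [], hlen | [_], hlen => simp at hlen
    | x :: y :: C, _ =>
      have hxy : x < y := List.rel_of_pairwise_cons (List.pairwise_append.1 hL₁).2.1 (by simp)
      have hyx : y ≤ x := List.rel_of_pairwise_cons hM₂ (by simp)
      omega

lemma eq_of_append_eq_of_length_mod_two_eq {L₁ M₁ L₂ M₂ : List ℕ} (h : L₁ ++ M₁ = L₂ ++ M₂)
    (hL₁ : L₁.Pairwise (· < ·)) (hM₁ : M₁.Pairwise (· ≥ ·))
    (hL₂ : L₂.Pairwise (· < ·)) (hM₂ : M₂.Pairwise (· ≥ ·))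
    (hpar : L₁.length % 2 = L₂.length % 2) : L₁ = L₂ ∧ M₁ = M₂ := by
  have h₁ := length_le_length_add_one_of_append_eq h hL₁ hM₂
  have h₂ := length_le_length_add_one_of_append_eq h.symm hL₂ hM₁
  exact List.append_inj h (by omega)

lemma lamMuWord_reverse (L M : List ℕ) :
    lamMuWord (L.reverse, M) = altWord (decide (L.length % 2 = 0)) (L ++ M) := by
  simp [lamMuWord]

lemma reverse_mem_Yset_iff {L M : List ℕ} {n : ℕ} :
    (L.reverse, M) ∈ Yset n ↔ L.Pairwise (· < ·) ∧ M.Pairwise (· ≥ ·) ∧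
      (∀ x ∈ L ++ M, 0 < x) ∧ (L ++ M).sum = n := by
  simp only [Yset, Set.mem_ofPred_eq, List.pairwise_reverse, List.mem_reverse, List.sum_reverse,
    List.mem_append, List.sum_append, or_imp, forall_and]
  tauto

lemma mapsTo_lamMuWord (n : ℕ) : Set.MapsTo lamMuWord (Yset n) (Wset n) := by
  rintro ⟨l, M⟩ hlM
  obtain ⟨L, rfl⟩ : ∃ L, l = L.reverse := ⟨l.reverse, l.reverse_reverse.symm⟩
  obtain ⟨hL, hM, hpos, rfl⟩ := reverse_mem_Yset_iff.1 hlM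
  rw [Wset, Set.mem_ofPred_eq, IrredWord, lamMuWord_reverse, length_altWord,
    signatureW_altWord _ _ hpos]
  exact ⟨rfl, not_reducibleSig_append hL hM⟩

lemma injOn_lamMuWord (n : ℕ) : Set.InjOn lamMuWord (Yset n) := by
  rintro ⟨l₁, M₁⟩ h₁ ⟨l₂, M₂⟩ h₂ heq
  obtain ⟨L₁, rfl⟩ : ∃ L, l₁ = L.reverse := ⟨l₁.reverse, l₁.reverse_reverse.symm⟩
  obtain ⟨L₂, rfl⟩ : ∃ L, l₂ = L.reverse := ⟨l₂.reverse, l₂.reverse_reverse.symm⟩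
  obtain ⟨hL₁, hM₁, hpos₁, -⟩ := reverse_mem_Yset_iff.1 h₁
  obtain ⟨hL₂, hM₂, hpos₂, -⟩ := reverse_mem_Yset_iff.1 h₂
  rw [lamMuWord_reverse, lamMuWord_reverse] at heq
  have hsig : L₁ ++ M₁ = L₂ ++ M₂ := by
    rw [← signatureW_altWord _ _ hpos₁, heq, signatureW_altWord _ _ hpos₂]
  rcases eq_or_ne (L₁ ++ M₁) [] with hnil | hne
  · obtain ⟨rfl, rfl⟩ := List.append_eq_nil_iff.1 hnil
    obtain ⟨rfl, rfl⟩ := List.append_eq_nil_iff.1 (hsig ▸ hnil)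
    rfl
  · have hhead := congrArg List.head? heq
    rw [head?_altWord _ hpos₁ hne, head?_altWord _ hpos₂ (hsig ▸ hne)] at hhead
    have hpar : L₁.length % 2 = L₂.length % 2 := by
      have := decide_eq_decide.1 (Option.some.inj hhead)
      omega
    obtain ⟨rfl, rfl⟩ := eq_of_append_eq_of_length_mod_two_eq hsig hL₁ hM₁ hL₂ hM₂ hpar
    rfl

lemma surjOn_lamMuWord (n : ℕ) : Set.SurjOn lamMuWord (Yset n) (Wset n) := by
  rintro (_ | ⟨b, t⟩) ⟨hlen, hirr⟩
  · exact ⟨([], []), by simpa [Yset] using hlen, rfl⟩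
  set s := signatureW (b :: t)
  have hword : altWord b s = b :: t := altWord_sigAux t b 1
  have hpos : ∀ x ∈ s, 0 < x := pos_of_mem_sigAux t b one_pos
  have hsum : s.sum = n := by rw [← length_altWord b, hword, hlen]
  have hne : s ≠ [] := by rintro hs; simp [hs, altWord] at hword
  obtain ⟨L, p, M, hs, hinc, hdec⟩ := exists_peak_of_not_reducibleSig hne hirr
  have mem_image_of_split : ∀ L' M', s = L' ++ M' → L'.Pairwise (· < ·) →
      M'.Pairwise (· ≥ ·) → decide (L'.length % 2 = 0) = b → b :: t ∈ lamMuWord '' Yset n := by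
    rintro L' M' hs' hL' hM' hb
    refine ⟨(L'.reverse, M'), reverse_mem_Yset_iff.2 ⟨hL', hM', hs' ▸ hpos, hs' ▸ hsum⟩, ?_⟩
    rw [lamMuWord_reverse, hb, ← hs', hword]
  have hinc' := List.isChain_iff_pairwise.1 hinc
  have hdec' := List.isChain_iff_pairwise.1 hdec
  by_cases hb : decide (L.length % 2 = 0) = b
  · exact mem_image_of_split L (p :: M) hs (List.pairwise_append.1 hinc').1 hdec' hb
  · refine mem_image_of_split (L ++ [p]) M (by simpa using hs) hinc' hdec'.of_cons ?_
    cases b <;> simp_all [Nat.succ_mod_two_eq_zero_iff]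

/-- for each `n`, the map `(λ, μ) ↦ ⋯x^{λ₂}y^{λ₁}x^{μ₁}y^{μ₂}⋯` is a
bijection from `Y_n` onto the irreducible words of length `n`; in particular the number
of irreducible words of length `n` equals `|Y_n|`. -/
theorem stmt13 (n : ℕ) :
    Set.BijOn lamMuWord (Yset n) (Wset n) ∧
      Nat.card (Wset n) = Nat.card (Yset n) := by
  have hbij : Set.BijOn lamMuWord (Yset n) (Wset n) :=
    ⟨mapsTo_lamMuWord n, injOn_lamMuWord n, surjOn_lamMuWord n⟩
  exact ⟨hbij, Nat.card_congr (hbij.equiv lamMuWord).symm⟩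
end
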